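/- arXiv:2510.22841 — 2 statements merged into one kernel-verified Lean document; each statement's English description precedes it below -/
import Mathlib

section
/- Under the linear panel model, Assumptions 1 and 2, and the doubly local alternative H_{1,n}, the pooled least squares estimator satisfies β̂_LS − β = O_p( M/(Nγ) + 1/√(NT) ) as N,T → ∞. -/
open MeasureTheory ProbabilityTheory Filter Matrix Finset
open scoped BigOperators NNReal ENNReal Classical Topology

noncomputable section

variable {Ω : Type*} [MeasurableSpace Ω]

/-- Convergence in probability of a sequence of real random variables to a constant. -/
def TendstoInProb (P : Measure Ω) (X : ℕ → Ω → ℝ) (c : ℝ) : Prop :=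
  ∀ ε : ℝ, 0 < ε → Tendsto (fun n => P {ω | ε ≤ |X n ω - c|}) atTop (𝓝 0)

/-- `X n = O_p(a n)`: boundedness in probability after division by `a n`. -/
def IsBigOp (P : Measure Ω) (X : ℕ → Ω → ℝ) (a : ℕ → ℝ) : Prop :=
  ∀ ε : ℝ, 0 < ε → ∃ C : ℝ, 0 < C ∧
    ∀ᶠ n in atTop, P {ω | C * |a n| < |X n ω|} ≤ ENNReal.ofReal ε

/-- `X n = o_p(1)`: convergence in probability to zero. -/
def IsLittleOp1 (P : Measure Ω) (X : ℕ → Ω → ℝ) : Prop := TendstoInProb P X 0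

/-- Convergence in distribution (weak convergence of the laws) to the law `μ`. -/
def ConvInDist (P : Measure Ω) (X : ℕ → Ω → ℝ) (μ : Measure ℝ) : Prop :=
  ∀ f : BoundedContinuousFunction ℝ ℝ,
    Tendsto (fun n => ∫ ω, f (X n ω) ∂P) atTop (𝓝 (∫ x, f x ∂μ))

/-- Divergence to `+∞` in probability. -/
def TendstoInProbTop (P : Measure Ω) (X : ℕ → Ω → ℝ) : Prop :=
  ∀ A : ℝ, Tendsto (fun n => P {ω | X n ω ≤ A}) atTop (𝓝 0)

/-- The noncentral chi-square distribution with `K` degrees of freedom and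
noncentrality parameter `δ`, realized as the law of `∑ k (Z k + √(δ/K))²` for
i.i.d. standard normal `Z k`. -/
def noncentralChiSq (K : ℕ) (δ : ℝ) : Measure ℝ :=
  Measure.map (fun z : Fin K → ℝ => ∑ k, (z k + Real.sqrt (δ / K)) ^ 2)
    (Measure.pi fun _ => gaussianReal 0 1)

/-- The (central) chi-square distribution with `K` degrees of freedom. -/
def chiSq (K : ℕ) : Measure ℝ := noncentralChiSq K 0

/-- Inverse square root of a positive semidefinite matrix (junk value `0` otherwise). -/
def invSqrtMat {m : Type*} [Fintype m] [DecidableEq m] (A : Matrix m m ℝ) : Matrix m m ℝ :=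
  if h : A.PosSemidef then
    (h.1.eigenvectorUnitary.1 * diagonal ((RCLike.ofReal : ℝ → ℝ) ∘ Real.sqrt ∘ h.1.eigenvalues) *
      (star h.1.eigenvectorUnitary : Matrix m m ℝ))⁻¹ else 0

/-- The data of a (triangular-array) linear panel `y_{it} = x_{it}'(β + λ_i) + ε_{it}`,
where the slope deviations `lam n i = λ_i` may depend on the sample-size index `n`. -/
structure PanelCore (Ω : Type*) [MeasurableSpace Ω] (K : ℕ) where
  /-- the underlying probability measure -/
  P : Measure Ω
  /-- cross-section size along the sequence -/
  N : ℕ → ℕ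
  /-- time-series size along the sequence -/
  T : ℕ → ℕ
  /-- local-alternative scaling γ -/
  γ : ℕ → ℝ
  /-- regressors `x i t k` -/
  x : ℕ → ℕ → Fin K → Ω → ℝ
  /-- idiosyncratic errors `ε i t` -/
  ε : ℕ → ℕ → Ω → ℝ
  /-- error variances `σ_i²` -/
  σ2 : ℕ → ℝ
  /-- the common slope -/
  β : Fin K → ℝ
  /-- slope deviations `λ_i` (possibly depending on `n`) -/
  lam : ℕ → ℕ → Fin K → ℝ

namespace PanelCore

variable {K : ℕ} (d : PanelCore Ω K)

/-- regressor vector `x_{it}` -/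
def xvec (i t : ℕ) (ω : Ω) : Fin K → ℝ := fun k => d.x i t k ω

/-- dependent variable `y_{it} = x_{it}'β_{g(i)} + ε_{it}` -/
def yv (n i t : ℕ) (ω : Ω) : ℝ :=
  (∑ k, d.x i t k ω * (d.β k + d.lam n i k)) + d.ε i t ω

/-- composite error `u_{it} = x_{it}'λ_i + ε_{it}` -/
def uv (n i t : ℕ) (ω : Ω) : ℝ :=
  (∑ k, d.x i t k ω * d.lam n i k) + d.ε i t ω

/-- `x_i'x_i` -/
def XtX (n i : ℕ) (ω : Ω) : Matrix (Fin K) (Fin K) ℝ :=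
  Matrix.of fun k l => ∑ t ∈ Finset.range (d.T n), d.x i t k ω * d.x i t l ω

/-- `x_i'y_i` -/
def Xty (n i : ℕ) (ω : Ω) : Fin K → ℝ :=
  fun k => ∑ t ∈ Finset.range (d.T n), d.x i t k ω * d.yv n i t ω

/-- `x_i'ε_i` -/
def XtEps (n i : ℕ) (ω : Ω) : Fin K → ℝ :=
  fun k => ∑ t ∈ Finset.range (d.T n), d.x i t k ω * d.ε i t ω

/-- pooled least squares estimator -/
def betaLS (n : ℕ) (ω : Ω) : Fin K → ℝ :=
  (∑ i ∈ Finset.range (d.N n), d.XtX n i ω)⁻¹.mulVec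
    (∑ i ∈ Finset.range (d.N n), d.Xty n i ω)

/-- pooled least squares residuals `ε̂_{it}` -/
def resid (n i t : ℕ) (ω : Ω) : ℝ :=
  d.yv n i t ω - ∑ k, d.x i t k ω * d.betaLS n ω k

/-- `σ̃_i² = ε̂_i'ε̂_i/(T-K-1)` -/
def sigmaTilde2 (n i : ℕ) (ω : Ω) : ℝ :=
  (∑ t ∈ Finset.range (d.T n), (d.resid n i t ω) ^ 2) / ((d.T n : ℝ) - K - 1)

/-- individual least squares estimator `β̂_i` -/
def betaHat (n i : ℕ) (ω : Ω) : Fin K → ℝ :=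
  (d.XtX n i ω)⁻¹.mulVec (d.Xty n i ω)

/-- `A = Σ_i x_i'x_i/σ̃_i²` -/
def Awls (n : ℕ) (ω : Ω) : Matrix (Fin K) (Fin K) ℝ :=
  ∑ i ∈ Finset.range (d.N n), (d.sigmaTilde2 n i ω)⁻¹ • d.XtX n i ω

/-- the weighted least squares estimator of PY -/
def betaWLS (n : ℕ) (ω : Ω) : Fin K → ℝ :=
  (d.Awls n ω)⁻¹.mulVec
    (∑ i ∈ Finset.range (d.N n), (d.sigmaTilde2 n i ω)⁻¹ • d.Xty n i ω)

/-- the Swamy-type dispersion statistic `S_PY` of PY -/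
def Spy (n : ℕ) (ω : Ω) : ℝ :=
  ∑ i ∈ Finset.range (d.N n),
    (d.betaHat n i ω - d.betaWLS n ω) ⬝ᵥ
      (((d.sigmaTilde2 n i ω)⁻¹ • d.XtX n i ω).mulVec (d.betaHat n i ω - d.betaWLS n ω))

/-- the standardized dispersion statistic `Δ` of PY -/
def Δstat (n : ℕ) (ω : Ω) : ℝ :=
  (d.Spy n ω - (d.N n : ℝ) * K) / Real.sqrt (2 * (d.N n : ℝ) * K)

/-- diagonal projection entry `h_{i,tt} = x_{it}'(x_i'x_i)⁻¹x_{it}` -/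
def hdiag (n i t : ℕ) (ω : Ω) : ℝ :=
  d.xvec i t ω ⬝ᵥ ((d.XtX n i ω)⁻¹.mulVec (d.xvec i t ω))

/-- `x_i'ε̂_i` -/
def XtRes (n i : ℕ) (ω : Ω) : Fin K → ℝ :=
  fun k => ∑ t ∈ Finset.range (d.T n), d.x i t k ω * d.resid n i t ω

/-- `LM_SC = Σ_i ε̂_i'x_i(x_i'x_i)⁻¹x_i'ε̂_i` -/
def LMsc (n : ℕ) (ω : Ω) : ℝ :=
  ∑ i ∈ Finset.range (d.N n),
    d.XtRes n i ω ⬝ᵥ ((d.XtX n i ω)⁻¹.mulVec (d.XtRes n i ω))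

/-- `B̂_NT = N^{-1/2} Σ_i Σ_t ε̂_{it}² h_{i,tt}` -/
def Bsc (n : ℕ) (ω : Ω) : ℝ :=
  (Real.sqrt (d.N n))⁻¹ *
    ∑ i ∈ Finset.range (d.N n), ∑ t ∈ Finset.range (d.T n),
      (d.resid n i t ω) ^ 2 * d.hdiag n i t ω

/-- `Ŝ_i = T⁻¹ x_i'x_i` -/
def Shati (n i : ℕ) (ω : Ω) : Matrix (Fin K) (Fin K) ℝ := ((d.T n : ℝ))⁻¹ • d.XtX n i ω

/-- `b̂_{it} = Ŝ_i^{-1/2} x_{it}` -/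
def bhat (n i t : ℕ) (ω : Ω) : Fin K → ℝ :=
  (invSqrtMat (d.Shati n i ω)).mulVec (d.xvec i t ω)

/-- the variance estimator `V̂_NT` of SC -/
def Vsc (n : ℕ) (ω : Ω) : ℝ :=
  4 * ((d.T n : ℝ) ^ 2)⁻¹ * (d.N n : ℝ)⁻¹ *
    ∑ i ∈ Finset.range (d.N n), ∑ t ∈ Finset.range (d.T n),
      (d.resid n i t ω *
        (d.bhat n i t ω ⬝ᵥ ∑ s ∈ Finset.range t, d.resid n i s ω • d.bhat n i s ω)) ^ 2

/-- the standardized statistic `𝒥` of SC -/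
def Jstat (n : ℕ) (ω : Ω) : ℝ :=
  ((Real.sqrt (d.N n))⁻¹ * d.LMsc n ω - d.Bsc n ω) / Real.sqrt (d.Vsc n ω)

/-- the BRS score vector `ŝ` -/
def shat (n : ℕ) (ω : Ω) : Fin K → ℝ := fun k =>
  ∑ i ∈ Finset.range (d.N n), ∑ t ∈ Finset.range (d.T n), ∑ s ∈ Finset.range t,
    d.resid n i t ω * d.resid n i s ω * d.x i t k ω * d.x i s k ω

/-- the BRS variance estimator `V̂` -/
def Vbrs (n : ℕ) (ω : Ω) : Matrix (Fin K) (Fin K) ℝ :=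
  Matrix.of fun k l =>
    ∑ i ∈ Finset.range (d.N n), ∑ t ∈ Finset.range (d.T n),
      ∑ s ∈ Finset.range t, ∑ p ∈ Finset.range t,
        (d.resid n i t ω) ^ 2 * d.x i t k ω * d.x i t l ω *
          d.resid n i s ω * d.resid n i p ω * d.x i s k ω * d.x i p l ω

/-- the BRS statistic `LM = ŝ'V̂⁻¹ŝ` -/
def LMstat (n : ℕ) (ω : Ω) : ℝ :=
  d.shat n ω ⬝ᵥ ((d.Vbrs n ω)⁻¹.mulVec (d.shat n ω))

/-- the boundary rate `√(MT)/(γ N^{1/4})` -/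
def rate (M : ℕ → ℕ) (n : ℕ) : ℝ :=
  Real.sqrt ((M n : ℝ) * d.T n) / (d.γ n * (d.N n : ℝ) ^ ((1 : ℝ) / 4))

/-- the `T×K` design matrix of unit `i` -/
def Xmat (n i : ℕ) (ω : Ω) : Matrix (Fin (d.T n)) (Fin K) ℝ :=
  Matrix.of fun t k => d.x i (t : ℕ) k ω

/-- the projection matrix `h_i = x_i(x_i'x_i)⁻¹x_i'` -/
def hproj (n i : ℕ) (ω : Ω) : Matrix (Fin (d.T n)) (Fin (d.T n)) ℝ :=
  d.Xmat n i ω * ((d.Xmat n i ω)ᵀ * d.Xmat n i ω)⁻¹ * (d.Xmat n i ω)ᵀ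

/-- `P_i = h_i - diag(h_i)` -/
def Pproj (n i : ℕ) (ω : Ω) : Matrix (Fin (d.T n)) (Fin (d.T n)) ℝ :=
  d.hproj n i ω - Matrix.diagonal (fun t => d.hproj n i ω t t)

/-- the error vector `ε_i` -/
def epsvecT (n i : ℕ) (ω : Ω) : Fin (d.T n) → ℝ := fun t => d.ε i (t : ℕ) ω

/-- the full sample `{1,…,N}` -/
def fullSet : ℕ → Finset ℕ := fun n => Finset.range (d.N n)

/-- Assumptions 1 and 2 of the paper (large `N`, large `T`):
i.i.d. errors independent of the regressors, bounded variances and sixth moments,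
and existence/positive definiteness of the plims `S_i` and `S^{(G)}`. -/
structure Assumptions (d : PanelCore Ω K) : Prop where
  isProb : IsProbabilityMeasure d.P
  meas_x : ∀ i t k, Measurable (d.x i t k)
  meas_eps : ∀ i t, Measurable (d.ε i t)
  eps_mean : ∀ i t, ∫ ω, d.ε i t ω ∂d.P = 0
  eps_var : ∀ i t, ∫ ω, (d.ε i t ω) ^ 2 ∂d.P = d.σ2 i
  σ2_bdd : ∃ C : ℝ, ∀ i, d.σ2 i < C
  σ2_pos : ∃ c : ℝ, 0 < c ∧ ∀ i, c ≤ d.σ2 i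
  eps_indep : iIndepFun
    (fun p : ℕ × ℕ => d.ε p.1 p.2) d.P
  eps_identTime : ∀ i t s, Measure.map (d.ε i t) d.P = Measure.map (d.ε i s) d.P
  eps_indep_x : IndepFun (fun ω (p : ℕ × ℕ) => d.ε p.1 p.2 ω)
    (fun ω (q : ℕ × ℕ × Fin K) => d.x q.1 q.2.1 q.2.2 ω) d.P
  eps_mom6 : ∃ C : ℝ, ∀ i t, ∫ ω, |d.ε i t ω| ^ 6 ∂d.P < C
  x_mom6 : ∃ C : ℝ, ∀ i t k, ∫ ω, |d.x i t k ω| ^ 6 ∂d.P < C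
  Si_lim : ∀ i, ∃ Si : Matrix (Fin K) (Fin K) ℝ, Si.PosDef ∧
    ∀ k l, TendstoInProb d.P
      (fun T ω => (T : ℝ)⁻¹ * ∑ t ∈ Finset.range T, d.x i t k ω * d.x i t l ω) (Si k l)
  SG_lim : ∀ Gf : ℕ → Finset ℕ, (∀ n, Gf n ⊆ Finset.range (d.N n)) →
    Tendsto (fun n => (Gf n).card) atTop atTop →
    ∃ A : Matrix (Fin K) (Fin K) ℝ, A.PosDef ∧
      ∀ k l, TendstoInProb d.P
        (fun n ω => (((Gf n).card : ℝ) * d.T n)⁻¹ *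
          ∑ i ∈ Gf n, ∑ t ∈ Finset.range (d.T n), d.x i t k ω * d.x i t l ω) (A k l)
  N_tendsto : Tendsto d.N atTop atTop
  T_tendsto : Tendsto d.T atTop atTop

/-- The sequence of doubly local alternatives `H_{1,n}`: a dominant group `G₁`
and a remainder group `G₂` of size `M`, with slope deviation `λ₂/γ` on `G₂`. -/
structure IsH1n (d : PanelCore Ω K) (G2 : ℕ → Finset ℕ) (M : ℕ → ℕ)
    (lam2 : Fin K → ℝ) : Prop where
  lam_eq : ∀ n i k, d.lam n i k = if i ∈ G2 n then lam2 k / d.γ n else 0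
  lam_ne : lam2 ≠ 0
  sub : ∀ n, G2 n ⊆ Finset.range (d.N n)
  card : ∀ n, (G2 n).card = M n
  M_tendsto : Tendsto M atTop atTop
  γ_tendsto : Tendsto d.γ atTop atTop

/-- `A = plim (#G·T)⁻¹ Σ_{i∈G} x_i'x_i` along the groups `Gf n`. -/
def SlimOn (Gf : ℕ → Finset ℕ) (A : Matrix (Fin K) (Fin K) ℝ) : Prop :=
  ∀ k l, TendstoInProb d.P
    (fun n ω => (((Gf n).card : ℝ) * d.T n)⁻¹ *
      ∑ i ∈ Gf n, ∑ t ∈ Finset.range (d.T n), d.x i t k ω * d.x i t l ω) (A k l)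

/-- `A = plim (#G·T)⁻¹ Σ_{i∈G} x_i'x_i/σ_i²` along the groups `Gf n`. -/
def QlimOn (Gf : ℕ → Finset ℕ) (A : Matrix (Fin K) (Fin K) ℝ) : Prop :=
  ∀ k l, TendstoInProb d.P
    (fun n ω => (((Gf n).card : ℝ) * d.T n)⁻¹ *
      ∑ i ∈ Gf n, (d.σ2 i)⁻¹ *
        ∑ t ∈ Finset.range (d.T n), d.x i t k ω * d.x i t l ω) (A k l)

/-- `A = plim (#G·T)⁻¹ Σ_{i∈G} Σ_t x_{it}x_{it}'(1-h_{i,tt})` along the groups `Gf n`. -/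
def WlimOn (Gf : ℕ → Finset ℕ) (A : Matrix (Fin K) (Fin K) ℝ) : Prop :=
  ∀ k l, TendstoInProb d.P
    (fun n ω => (((Gf n).card : ℝ) * d.T n)⁻¹ *
      ∑ i ∈ Gf n, ∑ t ∈ Finset.range (d.T n),
        d.x i t k ω * d.x i t l ω * (1 - d.hdiag n i t ω)) (A k l)

/-- `A = plim (#G·T²)⁻¹ Σ_{i∈G} Σ_{s<t} x_{it,k} x_{it} x_{is,k} x_{is}'` along `Gf n`. -/
def OmlimOn (Gf : ℕ → Finset ℕ) (k : Fin K) (A : Matrix (Fin K) (Fin K) ℝ) : Prop :=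
  ∀ a b, TendstoInProb d.P
    (fun n ω => (((Gf n).card : ℝ) * (d.T n : ℝ) ^ 2)⁻¹ *
      ∑ i ∈ Gf n, ∑ t ∈ Finset.range (d.T n), ∑ s ∈ Finset.range t,
        d.x i t k ω * d.x i t a ω * d.x i s k ω * d.x i s b ω) (A a b)

/-- `Ψ_{kl} = plim (NT²)⁻¹ Σ_i Σ_{s<t} σ_i⁴ x_{it,k}x_{it,l}x_{is,k}x_{is,l}`. -/
def PsiLim (Ψ : Matrix (Fin K) (Fin K) ℝ) : Prop :=
  ∀ k l, TendstoInProb d.P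
    (fun n ω => ((d.N n : ℝ) * (d.T n : ℝ) ^ 2)⁻¹ *
      ∑ i ∈ Finset.range (d.N n), (d.σ2 i) ^ 2 *
        ∑ t ∈ Finset.range (d.T n), ∑ s ∈ Finset.range t,
          d.x i t k ω * d.x i t l ω * d.x i s k ω * d.x i s l ω) (Ψ k l)

/-- `S_i = plim_{T→∞} T⁻¹x_i'x_i` for each unit `i`. -/
def SiLim (Si : ℕ → Matrix (Fin K) (Fin K) ℝ) : Prop :=
  ∀ i k l, TendstoInProb d.P
    (fun T ω => (T : ℝ)⁻¹ * ∑ t ∈ Finset.range T, d.x i t k ω * d.x i t l ω) (Si i k l)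

/-- `V₀ = lim 4T⁻²N⁻¹ Σ_i Σ_t E[(ε_{it} b_{it}' Σ_{s<t} b_{is}ε_{is})²]` with `b_{it}=S_i x_{it}`. -/
def V0lim (Si : ℕ → Matrix (Fin K) (Fin K) ℝ) (V0 : ℝ) : Prop :=
  Tendsto (fun n => 4 * ((d.T n : ℝ) ^ 2)⁻¹ * (d.N n : ℝ)⁻¹ *
    ∑ i ∈ Finset.range (d.N n), ∑ t ∈ Finset.range (d.T n),
      ∫ ω, (d.ε i t ω * ((Si i).mulVec (d.xvec i t ω) ⬝ᵥ
        ∑ s ∈ Finset.range t, d.ε i s ω • (Si i).mulVec (d.xvec i s ω))) ^ 2 ∂d.P)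
    atTop (𝓝 V0)

end PanelCore


lemma evtl_le_of_tendsto_zero {f : ℕ → ℝ≥0∞} (h : Tendsto f atTop (𝓝 0)) {ε : ℝ} (hε : 0 < ε) :
    ∀ᶠ n in atTop, f n ≤ ENNReal.ofReal ε := by
  have : (0 : ℝ≥0∞) < ENNReal.ofReal ε := ENNReal.ofReal_pos.mpr hε
  exact (h.eventually_lt_const this).mono fun n hn => hn.le

lemma tendstoInProb_comp {Ω : Type*} [MeasurableSpace Ω] {ι : Type*} [Fintype ι]
    {P : Measure Ω} {X : ℕ → Ω → ι → ℝ}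
    {c : ι → ℝ} (h : ∀ i, TendstoInProb P (fun n ω => X n ω i) (c i))
    {f : (ι → ℝ) → ℝ} (hf : ContinuousAt f c) :
    TendstoInProb P (fun n ω => f (X n ω)) (f c) := by
  intro ε hε
  have hnb : f ⁻¹' Metric.ball (f c) ε ∈ 𝓝 c :=
    hf.preimage_mem_nhds (Metric.ball_mem_nhds (f c) hε)
  obtain ⟨δ, hδ, hball⟩ := Metric.mem_nhds_iff.mp hnb
  have hsub : ∀ n, {ω | ε ≤ |f (X n ω) - f c|} ⊆
      ⋃ i ∈ (Finset.univ : Finset ι), {ω | δ / 2 ≤ |X n ω i - c i|} := by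
    intro n ω hω
    by_contra hcon
    simp only [Set.mem_iUnion, Set.mem_setOf_eq, not_exists, not_le] at hcon
    have hd : dist (X n ω) c < δ := by
      rcases isEmpty_or_nonempty ι with hι | hι
      · simpa [dist_pi_def] using hδ
      · rw [dist_pi_lt_iff hδ]
        intro i
        have := hcon i (Finset.mem_univ i)
        rw [Real.dist_eq]
        linarith
    have := hball hd
    simp only [Set.mem_preimage, Metric.mem_ball, Real.dist_eq] at this
    simp only [Set.mem_setOf_eq] at hω
    linarith
  have hbound : ∀ n, P {ω | ε ≤ |f (X n ω) - f c|} ≤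
      ∑ i ∈ (Finset.univ : Finset ι), P {ω | δ / 2 ≤ |X n ω i - c i|} :=
    fun n => (measure_mono (hsub n)).trans (measure_biUnion_finset_le _ _)
  have hsum : Tendsto (fun n => ∑ i ∈ (Finset.univ : Finset ι),
      P {ω | δ / 2 ≤ |X n ω i - c i|}) atTop (𝓝 0) := by
    have := tendsto_finset_sum (Finset.univ : Finset ι)
      (fun i _ => h i (δ / 2) (by linarith))
    simpa using this
  exact tendsto_of_tendsto_of_tendsto_of_le_of_le tendsto_const_nhds hsum
    (fun n => zero_le) hbound

lemma smul_inv_mat {K : ℕ} (hK : 0 < K) (c : ℝ) (hc : c ≠ 0) (M : Matrix (Fin K) (Fin K) ℝ) :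
    (c • M)⁻¹ = c⁻¹ • M⁻¹ := by
  obtain ⟨m, rfl⟩ : ∃ m, K = m + 1 := ⟨K - 1, (Nat.succ_pred_eq_of_pos hK).symm⟩
  rw [Matrix.inv_def, Matrix.inv_def, Matrix.det_smul, Matrix.adjugate_smul,
    Ring.inverse_eq_inv, Ring.inverse_eq_inv, smul_smul, smul_smul]
  congr 1
  simp only [Fintype.card_fin, Nat.add_sub_cancel]
  rcases eq_or_ne M.det 0 with hd | hd
  · simp [hd]
  · rw [mul_inv]
    field_simp
    ring

set_option maxHeartbeats 4000000 in
/-- **Lemma 1.** Under Assumptions 1, 2 and `H_{1,n}`, the pooled least squares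
estimator satisfies `β̂_LS - β = O_p(M/(Nγ) + 1/√(NT))` as `N, T → ∞`. -/
theorem pooled_LS_rate_under_H1n
    {K : ℕ} (d : PanelCore Ω K) (G2 : ℕ → Finset ℕ) (M : ℕ → ℕ) (lam2 : Fin K → ℝ)
    (hA : d.Assumptions) (hH : d.IsH1n G2 M lam2) :
    ∀ k : Fin K, IsBigOp d.P (fun n ω => d.betaLS n ω k - d.β k)
      (fun n => (M n : ℝ) / ((d.N n : ℝ) * d.γ n)
        + (Real.sqrt ((d.N n : ℝ) * (d.T n : ℝ)))⁻¹) := by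
  classical
  haveI hPr : IsProbabilityMeasure d.P := hA.isProb
  intro k
  have hK : 0 < K := k.pos
  intro ε hε
  -- limit matrices
  obtain ⟨A, hApos, hAlim⟩ := hA.SG_lim (fun n => Finset.range (d.N n)) (fun _ => subset_rfl)
    (by simpa using hA.N_tendsto)
  simp only [Finset.card_range] at hAlim
  obtain ⟨A2, hA2pos, hA2lim⟩ := hA.SG_lim G2 hH.sub
    (by simpa [hH.card] using hH.M_tendsto)
  simp only [hH.card] at hA2lim
  have hdetA : A.det ≠ 0 := hApos.det_pos.ne'
  -- local abbreviations
  obtain ⟨Xb, hXb⟩ : ∃ Xb : ℕ → Ω → (Fin K × Fin K) → ℝ,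
      Xb = fun n ω p =>
        ((d.N n : ℝ) * d.T n)⁻¹ * ∑ i ∈ Finset.range (d.N n), ∑ t ∈ Finset.range (d.T n),
          d.x i t p.1 ω * d.x i t p.2 ω := ⟨_, rfl⟩
  obtain ⟨Bbar, hBbar⟩ : ∃ Bbar : ℕ → Ω → Matrix (Fin K) (Fin K) ℝ,
      Bbar = fun n ω => Matrix.of fun a b => Xb n ω (a, b) := ⟨_, rfl⟩
  obtain ⟨w2, hw2⟩ : ∃ w2 : ℕ → Ω → Fin K → ℝ,
      w2 = fun n ω l => ∑ i ∈ Finset.range (d.N n), ∑ t ∈ Finset.range (d.T n),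
        d.x i t l ω * d.ε i t ω := ⟨_, rfl⟩
  obtain ⟨Sll, hSllDef⟩ : ∃ Sll : ℕ → Ω → Fin K → ℝ,
      Sll = fun n ω l => ∑ i ∈ Finset.range (d.N n), ∑ t ∈ Finset.range (d.T n),
        d.x i t l ω * d.x i t l ω := ⟨_, rfl⟩
  -- convergence of Bbar determinant and inverse entries
  have hMcont : Continuous (fun v : (Fin K × Fin K) → ℝ =>
      (Matrix.of fun a b => v (a, b) : Matrix (Fin K) (Fin K) ℝ)) :=
    continuous_matrix fun a b => continuous_apply (a, b)
  have hrepr : ∀ (B : Matrix (Fin K) (Fin K) ℝ) (a b : Fin K),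
      B⁻¹ a b = (B.det)⁻¹ * B.adjugate a b := by
    intro B a b
    rw [Matrix.inv_def, Ring.inverse_eq_inv]
    rfl
  have hcoords : ∀ p : Fin K × Fin K, TendstoInProb d.P
      (fun n ω => Xb n ω p) (A p.1 p.2) := by
    intro p
    simp only [hXb]
    exact hAlim p.1 p.2
  have hdet : TendstoInProb d.P (fun n ω => (Bbar n ω).det) A.det := by
    have h1 := tendstoInProb_comp (P := d.P) (X := Xb)
      (c := fun p => A p.1 p.2) hcoords
      (f := fun v => (Matrix.of fun a b => v (a, b) : Matrix (Fin K) (Fin K) ℝ).det)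
      hMcont.matrix_det.continuousAt
    rw [hBbar]
    exact h1
  have hinv : ∀ l : Fin K, TendstoInProb d.P (fun n ω => (Bbar n ω)⁻¹ k l) (A⁻¹ k l) := by
    intro l
    have hfc : ContinuousAt (fun v : (Fin K × Fin K) → ℝ =>
        ((Matrix.of fun a b => v (a, b) : Matrix (Fin K) (Fin K) ℝ).det)⁻¹ *
          (Matrix.of fun a b => v (a, b) : Matrix (Fin K) (Fin K) ℝ).adjugate k l)
        (fun p => A p.1 p.2) := by
      have h2 : ContinuousAt (fun v : (Fin K × Fin K) → ℝ =>
          ((Matrix.of fun a b => v (a, b) : Matrix (Fin K) (Fin K) ℝ).det)⁻¹)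
          (fun p => A p.1 p.2) :=
        (hMcont.matrix_det.continuousAt).inv₀ (by exact hdetA)
      exact h2.mul (hMcont.matrix_adjugate.matrix_elem k l).continuousAt
    have h1 := tendstoInProb_comp (P := d.P) (X := Xb)
      (c := fun p => A p.1 p.2) hcoords
      (f := fun v => ((Matrix.of fun a b => v (a, b) : Matrix (Fin K) (Fin K) ℝ).det)⁻¹ *
        (Matrix.of fun a b => v (a, b) : Matrix (Fin K) (Fin K) ℝ).adjugate k l) hfc
    simp only [hrepr, hBbar]
    exact h1
  have hZ1 : ∀ l : Fin K, TendstoInProb d.P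
      (fun n ω => ∑ m, lam2 m * (((M n : ℝ) * d.T n)⁻¹ * ∑ i ∈ G2 n,
        ∑ t ∈ Finset.range (d.T n), d.x i t l ω * d.x i t m ω))
      (∑ m, lam2 m * A2 l m) := by
    intro l
    have hfc : Continuous (fun v : Fin K → ℝ => ∑ m, lam2 m * v m) :=
      continuous_finset_sum _ fun m _ => continuous_const.mul (continuous_apply m)
    have h1 := tendstoInProb_comp (P := d.P)
      (X := fun n ω m => ((M n : ℝ) * d.T n)⁻¹ * ∑ i ∈ G2 n,
        ∑ t ∈ Finset.range (d.T n), d.x i t l ω * d.x i t m ω)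
      (c := fun m => A2 l m) (fun m => hA2lim l m)
      (f := fun v => ∑ m, lam2 m * v m) hfc.continuousAt
    exact h1
  -- constants
  obtain ⟨Cs, hCs⟩ := hA.σ2_bdd
  obtain ⟨cs, hcspos, hcs⟩ := hA.σ2_pos
  have hCspos : 0 < Cs := lt_of_lt_of_le hcspos ((hcs 0).trans (hCs 0).le)
  obtain ⟨δ, hδpos, hδeq⟩ : ∃ δ : ℝ, 0 < δ ∧ δ = ε / (4 * K + 1) :=
    ⟨_, by positivity, rfl⟩
  obtain ⟨c1, hc1pos, hc1eq⟩ : ∃ c1 : Fin K → ℝ, (∀ l, 0 < c1 l) ∧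
      (∀ l, c1 l = |A⁻¹ k l| + 1) :=
    ⟨fun l => |A⁻¹ k l| + 1, fun l => by positivity, fun l => rfl⟩
  obtain ⟨c0, hc0pos, hc0eq⟩ : ∃ c0 : Fin K → ℝ, (∀ l, 0 < c0 l) ∧
      (∀ l, c0 l = |∑ m, lam2 m * A2 l m| + 1) :=
    ⟨fun l => |∑ m, lam2 m * A2 l m| + 1, fun l => by positivity, fun l => rfl⟩
  obtain ⟨D, hDpos, hDeq⟩ : ∃ D : Fin K → ℝ, (∀ l, 0 < D l) ∧
      (∀ l, D l = |A l l| + 1) :=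
    ⟨fun l => |A l l| + 1, fun l => by positivity, fun l => rfl⟩
  obtain ⟨C2, hC2pos, hC2eq⟩ : ∃ C2 : Fin K → ℝ, (∀ l, 0 < C2 l) ∧
      (∀ l, C2 l = Real.sqrt (Cs * D l / δ) + 1) :=
    ⟨fun l => Real.sqrt (Cs * D l / δ) + 1,
      fun l => lt_of_lt_of_le one_pos (le_add_of_nonneg_left (Real.sqrt_nonneg _)), fun l => rfl⟩
  have hC2key : ∀ l, Cs * D l / (C2 l) ^ 2 ≤ δ := by
    intro l
    have hq : 0 < Cs * D l / δ := div_pos (mul_pos hCspos (hDpos l)) hδpos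
    have h1 : Cs * D l / δ ≤ (C2 l) ^ 2 := by
      rw [hC2eq l]
      nlinarith [Real.sqrt_nonneg (Cs * D l / δ), Real.sq_sqrt hq.le]
    have h2 : Cs * D l / (C2 l) ^ 2 ≤ Cs * D l / (Cs * D l / δ) :=
      div_le_div_of_nonneg_left (mul_pos hCspos (hDpos l)).le hq h1
    have h3 : Cs * D l / (Cs * D l / δ) = δ := by
      rw [div_div_eq_mul_div, mul_comm, mul_div_assoc,
        div_self (mul_pos hCspos (hDpos l)).ne']
      ring
    linarith
  obtain ⟨C, hCpos, hCeq⟩ : ∃ C : ℝ, 0 < C ∧ C = 1 + ∑ l, c1 l * (c0 l + C2 l) := by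
    refine ⟨_, ?_, rfl⟩
    have : (0:ℝ) ≤ ∑ l, c1 l * (c0 l + C2 l) :=
      Finset.sum_nonneg fun l _ =>
        mul_nonneg (hc1pos l).le (add_nonneg (hc0pos l).le (hC2pos l).le)
    linarith
  refine ⟨C, hCpos, ?_⟩
  -- basic integrability facts
  have hem : ∀ i t, Measurable (d.ε i t) := hA.meas_eps
  have hepsSqInt : ∀ i t, Integrable (fun ω => d.ε i t ω ^ 2) d.P := by
    intro i t
    by_contra hni
    have h0 := integral_undef hni
    have := (hA.eps_var i t).symm.trans h0
    have := lt_of_lt_of_le hcspos (hcs i)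
    linarith
  have hepsInt : ∀ i t, Integrable (d.ε i t) d.P := by
    intro i t
    refine Integrable.mono ((integrable_const (1:ℝ)).add (hepsSqInt i t))
      (hem i t).aestronglyMeasurable (ae_of_all _ fun ω => ?_)
    simp only [Real.norm_eq_abs, Pi.add_apply]
    have h1 : |d.ε i t ω| ≤ 1 + d.ε i t ω ^ 2 := by
      nlinarith [sq_abs (d.ε i t ω), abs_nonneg (d.ε i t ω)]
    have h2 : (0:ℝ) ≤ 1 + d.ε i t ω ^ 2 := by positivity
    rw [abs_of_nonneg h2]
    exact h1
  have hepsMulInt : ∀ p q : ℕ × ℕ,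
      Integrable (fun ω => d.ε p.1 p.2 ω * d.ε q.1 q.2 ω) d.P := by
    intro p q
    refine Integrable.mono ((hepsSqInt p.1 p.2).add (hepsSqInt q.1 q.2))
      ((hem _ _).mul (hem _ _)).aestronglyMeasurable (ae_of_all _ fun ω => ?_)
    simp only [Real.norm_eq_abs, Pi.add_apply]
    rw [abs_mul, abs_of_nonneg
      (show (0:ℝ) ≤ d.ε p.1 p.2 ω ^ 2 + d.ε q.1 q.2 ω ^ 2 by positivity)]
    nlinarith [sq_abs (d.ε p.1 p.2 ω), sq_abs (d.ε q.1 q.2 ω),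
      sq_nonneg (|d.ε p.1 p.2 ω| - |d.ε q.1 q.2 ω|),
      abs_nonneg (d.ε p.1 p.2 ω), abs_nonneg (d.ε q.1 q.2 ω)]
  have hepsZero : ∀ p q : ℕ × ℕ, p ≠ q →
      ∫ ω, d.ε p.1 p.2 ω * d.ε q.1 q.2 ω ∂d.P = 0 := by
    intro p q hpq
    have hind : IndepFun (d.ε p.1 p.2) (d.ε q.1 q.2) d.P := hA.eps_indep.indepFun hpq
    have h1 := hind.integral_mul_eq_mul_integral (hepsInt p.1 p.2).aestronglyMeasurable (hepsInt q.1 q.2).aestronglyMeasurable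
    have h2 : integral d.P (d.ε p.1 p.2) = 0 := hA.eps_mean p.1 p.2
    have h3 : integral d.P (d.ε q.1 q.2) = 0 := hA.eps_mean q.1 q.2
    show integral d.P (d.ε p.1 p.2 * d.ε q.1 q.2) = 0
    rw [h1, h2, h3, mul_zero]
  -- decomposition of the score vector
  have hdecomp : ∀ (n : ℕ) (ω : Ω) (l : Fin K),
      (∑ i ∈ Finset.range (d.N n), d.Xty n i ω l) =
        ((∑ i ∈ Finset.range (d.N n), d.XtX n i ω).mulVec d.β) l
        + (d.γ n)⁻¹ * (∑ i ∈ G2 n, ∑ m, (∑ t ∈ Finset.range (d.T n),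
            d.x i t l ω * d.x i t m ω) * lam2 m)
        + w2 n ω l := by
    intro n ω l
    have hylam : ∀ i t, d.yv n i t ω =
        (∑ m, d.x i t m ω * d.β m) + (∑ m, d.x i t m ω * d.lam n i m) + d.ε i t ω := by
      intro i t
      simp only [PanelCore.yv, mul_add, Finset.sum_add_distrib]
    have h1 : (∑ i ∈ Finset.range (d.N n), d.Xty n i ω l)
        = (∑ i ∈ Finset.range (d.N n), ∑ t ∈ Finset.range (d.T n),
            ∑ m, d.x i t l ω * (d.x i t m ω * d.β m))
        + ((∑ i ∈ Finset.range (d.N n), ∑ t ∈ Finset.range (d.T n),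
            ∑ m, d.x i t l ω * (d.x i t m ω * d.lam n i m))
        + w2 n ω l) := by
      rw [hw2]
      rw [← Finset.sum_add_distrib, ← Finset.sum_add_distrib]
      refine Finset.sum_congr rfl fun i _ => ?_
      simp only [PanelCore.Xty]
      rw [← Finset.sum_add_distrib, ← Finset.sum_add_distrib]
      refine Finset.sum_congr rfl fun t _ => ?_
      rw [hylam i t, mul_add, mul_add, Finset.mul_sum, Finset.mul_sum]
      ring
    have h2 : (∑ i ∈ Finset.range (d.N n), ∑ t ∈ Finset.range (d.T n),
          ∑ m, d.x i t l ω * (d.x i t m ω * d.β m))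
        = ((∑ i ∈ Finset.range (d.N n), d.XtX n i ω).mulVec d.β) l := by
      have hmv : ((∑ i ∈ Finset.range (d.N n), d.XtX n i ω).mulVec d.β) l
          = ∑ m, (∑ i ∈ Finset.range (d.N n), ∑ t ∈ Finset.range (d.T n),
              d.x i t l ω * d.x i t m ω) * d.β m := by
        simp only [Matrix.mulVec, dotProduct, Matrix.sum_apply, PanelCore.XtX,
          Matrix.of_apply]
      rw [hmv]
      calc (∑ i ∈ Finset.range (d.N n), ∑ t ∈ Finset.range (d.T n),
              ∑ m, d.x i t l ω * (d.x i t m ω * d.β m))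
          = ∑ i ∈ Finset.range (d.N n), ∑ m : Fin K, ∑ t ∈ Finset.range (d.T n),
              d.x i t l ω * (d.x i t m ω * d.β m) :=
            Finset.sum_congr rfl fun i _ => Finset.sum_comm
        _ = ∑ m : Fin K, ∑ i ∈ Finset.range (d.N n), ∑ t ∈ Finset.range (d.T n),
              d.x i t l ω * (d.x i t m ω * d.β m) := Finset.sum_comm
        _ = ∑ m, (∑ i ∈ Finset.range (d.N n), ∑ t ∈ Finset.range (d.T n),
              d.x i t l ω * d.x i t m ω) * d.β m := by
            refine Finset.sum_congr rfl fun m _ => ?_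
            rw [Finset.sum_mul]
            refine Finset.sum_congr rfl fun i _ => ?_
            rw [Finset.sum_mul]
            refine Finset.sum_congr rfl fun t _ => ?_
            ring
    have h3 : (∑ i ∈ Finset.range (d.N n), ∑ t ∈ Finset.range (d.T n),
          ∑ m, d.x i t l ω * (d.x i t m ω * d.lam n i m))
        = (d.γ n)⁻¹ * (∑ i ∈ G2 n, ∑ m, (∑ t ∈ Finset.range (d.T n),
            d.x i t l ω * d.x i t m ω) * lam2 m) := by
      have key : ∀ i, (∑ t ∈ Finset.range (d.T n), ∑ m, d.x i t l ω * (d.x i t m ω * d.lam n i m))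
          = if i ∈ G2 n then (d.γ n)⁻¹ * ∑ m, (∑ t ∈ Finset.range (d.T n),
              d.x i t l ω * d.x i t m ω) * lam2 m else 0 := by
        intro i
        by_cases hi : i ∈ G2 n
        · rw [if_pos hi, Finset.mul_sum, Finset.sum_comm]
          refine Finset.sum_congr rfl fun m _ => ?_
          simp only [hH.lam_eq, hi, if_true]
          rw [Finset.sum_mul, Finset.mul_sum]
          refine Finset.sum_congr rfl fun t _ => ?_
          rw [div_eq_mul_inv]
          ring
        · simp [hH.lam_eq, hi]
      rw [Finset.sum_congr rfl (fun i _ => key i)]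
      rw [Finset.sum_ite_mem, Finset.inter_eq_right.mpr (hH.sub n), Finset.mul_sum]
    rw [h1, h2, h3]
    ring
  -- variance of epsilon products
  have heps2 : ∀ p : ℕ × ℕ, ∫ ω, d.ε p.1 p.2 ω * d.ε p.1 p.2 ω ∂d.P = d.σ2 p.1 := by
    intro p
    have h := hA.eps_var p.1 p.2
    rw [← h]
    congr 1
    funext ω
    rw [pow_two]
  -- the conditional Chebyshev bound
  have hMarkov : ∀ (l : Fin K) (n : ℕ), 1 ≤ d.N n → 1 ≤ d.T n →
      d.P ({ω | C2 l * Real.sqrt ((d.N n : ℝ) * d.T n) ≤ |w2 n ω l|} ∩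
        {ω | Sll n ω l ≤ D l * ((d.N n : ℝ) * d.T n)}) ≤ ENNReal.ofReal δ := by
    intro l n hN hT
    set r : ℝ := (d.N n : ℝ) * d.T n with hr
    have hrpos : 0 < r := by
      have h1 : (1:ℝ) ≤ d.N n := by exact_mod_cast hN
      have h2 : (1:ℝ) ≤ d.T n := by exact_mod_cast hT
      nlinarith
    set Q : Finset (ℕ × ℕ) := Finset.range (d.N n) ×ˢ Finset.range (d.T n) with hQ
    obtain ⟨χ, hχ⟩ : ∃ χ : Ω → ℝ, χ = fun ω =>
        if (∑ p ∈ Q, d.x p.1 p.2 l ω * d.x p.1 p.2 l ω) ≤ D l * r then (1:ℝ) else 0 :=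
      ⟨_, rfl⟩
    have hSQ : ∀ ω, Sll n ω l = ∑ p ∈ Q, d.x p.1 p.2 l ω * d.x p.1 p.2 l ω := by
      intro ω
      rw [hSllDef, hQ]
      rw [Finset.sum_product]
    have hw2Q : ∀ ω, w2 n ω l = ∑ p ∈ Q, d.x p.1 p.2 l ω * d.ε p.1 p.2 ω := by
      intro ω
      rw [hw2, hQ]
      rw [Finset.sum_product]
    have hχmeas : Measurable χ := by
      rw [hχ]
      have hs : Measurable (fun ω => ∑ p ∈ Q, d.x p.1 p.2 l ω * d.x p.1 p.2 l ω) :=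
        Finset.measurable_sum _ fun p _ => (hA.meas_x _ _ _).mul (hA.meas_x _ _ _)
      exact Measurable.ite (measurableSet_le hs measurable_const)
        measurable_const measurable_const
    have hχnonneg : ∀ ω, 0 ≤ χ ω := by
      intro ω; rw [hχ]; dsimp only; split <;> norm_num
    have hDr : (0:ℝ) ≤ D l * r := mul_nonneg (hDpos l).le hrpos.le
    have hbdd : ∀ p ∈ Q, ∀ q ∈ Q, ∀ ω,
        |χ ω * (d.x p.1 p.2 l ω * d.x q.1 q.2 l ω)| ≤ D l * r := by
      intro p hp q hq ω
      rw [hχ]; dsimp only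
      split
      case isTrue h =>
        rw [one_mul, abs_mul]
        have hxp : d.x p.1 p.2 l ω * d.x p.1 p.2 l ω
            ≤ ∑ p' ∈ Q, d.x p'.1 p'.2 l ω * d.x p'.1 p'.2 l ω :=
          Finset.single_le_sum (f := fun p' => d.x p'.1 p'.2 l ω * d.x p'.1 p'.2 l ω)
            (fun q' _ => mul_self_nonneg _) hp
        have hxq : d.x q.1 q.2 l ω * d.x q.1 q.2 l ω
            ≤ ∑ p' ∈ Q, d.x p'.1 p'.2 l ω * d.x p'.1 p'.2 l ω :=
          Finset.single_le_sum (f := fun p' => d.x p'.1 p'.2 l ω * d.x p'.1 p'.2 l ω)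
            (fun q' _ => mul_self_nonneg _) hq
        have e1 : |d.x p.1 p.2 l ω| * |d.x q.1 q.2 l ω| ≤
            (d.x p.1 p.2 l ω * d.x p.1 p.2 l ω + d.x q.1 q.2 l ω * d.x q.1 q.2 l ω) / 2 := by
          nlinarith [sq_nonneg (|d.x p.1 p.2 l ω| - |d.x q.1 q.2 l ω|),
            sq_abs (d.x p.1 p.2 l ω), sq_abs (d.x q.1 q.2 l ω),
            pow_two (d.x p.1 p.2 l ω), pow_two (d.x q.1 q.2 l ω)]
        linarith
      case isFalse h =>
        rw [zero_mul, abs_zero]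
        exact hDr
    have hFint : ∀ p ∈ Q, ∀ q ∈ Q,
        Integrable (fun ω => χ ω * (d.x p.1 p.2 l ω * d.x q.1 q.2 l ω)) d.P := by
      intro p hp q hq
      refine ⟨(hχmeas.mul ((hA.meas_x _ _ _).mul (hA.meas_x _ _ _))).aestronglyMeasurable, ?_⟩
      exact HasFiniteIntegral.of_bounded (C := D l * r)
        (ae_of_all _ fun ω => by simpa only [Real.norm_eq_abs] using hbdd p hp q hq ω)
    have hIndepFH : ∀ p q : ℕ × ℕ, IndepFun
        (fun ω => χ ω * (d.x p.1 p.2 l ω * d.x q.1 q.2 l ω))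
        (fun ω => d.ε p.1 p.2 ω * d.ε q.1 q.2 ω) d.P := by
      intro p q
      rw [hχ]
      have hs : Measurable (fun u : ℕ × ℕ × Fin K → ℝ =>
          ∑ p' ∈ Q, u (p'.1, p'.2, l) * u (p'.1, p'.2, l)) :=
        Finset.measurable_sum _ fun p' _ => (measurable_pi_apply _).mul (measurable_pi_apply _)
      have hφm : Measurable (fun u : ℕ × ℕ × Fin K → ℝ =>
          (if (∑ p' ∈ Q, u (p'.1, p'.2, l) * u (p'.1, p'.2, l)) ≤ D l * r then (1:ℝ) else 0) *
            (u (p.1, p.2, l) * u (q.1, q.2, l))) :=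
        (Measurable.ite (measurableSet_le hs measurable_const) measurable_const
          measurable_const).mul ((measurable_pi_apply _).mul (measurable_pi_apply _))
      have hψm : Measurable (fun u : ℕ × ℕ → ℝ => u p * u q) :=
        (measurable_pi_apply p).mul (measurable_pi_apply q)
      exact (hA.eps_indep_x.comp hψm hφm).symm
    have hterm : ∀ p ∈ Q, ∀ q ∈ Q,
        ∫ ω, (χ ω * (d.x p.1 p.2 l ω * d.x q.1 q.2 l ω)) * (d.ε p.1 p.2 ω * d.ε q.1 q.2 ω) ∂d.P
          = (∫ ω, χ ω * (d.x p.1 p.2 l ω * d.x q.1 q.2 l ω) ∂d.P) *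
            (∫ ω, d.ε p.1 p.2 ω * d.ε q.1 q.2 ω ∂d.P) := by
      intro p hp q hq
      exact (hIndepFH p q).integral_fun_mul_eq_mul_integral (hFint p hp q hq).aestronglyMeasurable (hepsMulInt p q).aestronglyMeasurable
    have htermInt : ∀ p ∈ Q, ∀ q ∈ Q, Integrable
        (fun ω => (χ ω * (d.x p.1 p.2 l ω * d.x q.1 q.2 l ω)) * (d.ε p.1 p.2 ω * d.ε q.1 q.2 ω))
        d.P := by
      intro p hp q hq
      refine Integrable.bdd_mul (c := D l * r) (hepsMulInt p q)
        ((hχmeas.mul ((hA.meas_x _ _ _).mul (hA.meas_x _ _ _))).aestronglyMeasurable) ?_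
      exact ae_of_all _ fun ω => by simpa only [Real.norm_eq_abs] using hbdd p hp q hq ω
    have hfe : (fun ω => χ ω * (w2 n ω l * w2 n ω l)) = fun ω =>
        ∑ p ∈ Q, ∑ q ∈ Q, (χ ω * (d.x p.1 p.2 l ω * d.x q.1 q.2 l ω)) *
          (d.ε p.1 p.2 ω * d.ε q.1 q.2 ω) := by
      funext ω
      rw [hw2Q ω, Finset.sum_mul_sum, Finset.mul_sum]
      refine Finset.sum_congr rfl fun p hp => ?_
      rw [Finset.mul_sum]
      refine Finset.sum_congr rfl fun q hq => ?_
      ring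
    have hInt1 : Integrable (fun ω => χ ω * (w2 n ω l * w2 n ω l)) d.P := by
      rw [hfe]
      exact integrable_finset_sum Q fun p hp =>
        integrable_finset_sum Q fun q hq => htermInt p hp q hq
    have hIntEq : ∫ ω, χ ω * (w2 n ω l * w2 n ω l) ∂d.P
        = ∑ p ∈ Q, (∫ ω, χ ω * (d.x p.1 p.2 l ω * d.x p.1 p.2 l ω) ∂d.P) * d.σ2 p.1 := by
      have h1 : ∫ ω, χ ω * (w2 n ω l * w2 n ω l) ∂d.P
          = ∑ p ∈ Q, ∑ q ∈ Q, (∫ ω, χ ω * (d.x p.1 p.2 l ω * d.x q.1 q.2 l ω) ∂d.P) *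
            (∫ ω, d.ε p.1 p.2 ω * d.ε q.1 q.2 ω ∂d.P) := by
        rw [hfe]
        rw [integral_finset_sum Q (fun p hp =>
          integrable_finset_sum Q fun q hq => htermInt p hp q hq)]
        refine Finset.sum_congr rfl fun p hp => ?_
        rw [integral_finset_sum Q (fun q hq => htermInt p hp q hq)]
        exact Finset.sum_congr rfl fun q hq => hterm p hp q hq
      rw [h1]
      refine Finset.sum_congr rfl fun p hp => ?_
      rw [Finset.sum_eq_single p]
      · rw [heps2 p]
      · intro q hq hqp
        rw [hepsZero p q (fun h => hqp h.symm), mul_zero]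
      · intro hp'
        exact (hp' hp).elim
    have hIntLe : ∫ ω, χ ω * (w2 n ω l * w2 n ω l) ∂d.P ≤ Cs * (D l * r) := by
      rw [hIntEq]
      have hint_nonneg : ∀ p : ℕ × ℕ,
          0 ≤ ∫ ω, χ ω * (d.x p.1 p.2 l ω * d.x p.1 p.2 l ω) ∂d.P := fun p =>
        integral_nonneg fun ω => mul_nonneg (hχnonneg ω) (mul_self_nonneg _)
      have step1 : ∑ p ∈ Q, (∫ ω, χ ω * (d.x p.1 p.2 l ω * d.x p.1 p.2 l ω) ∂d.P) * d.σ2 p.1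
          ≤ ∑ p ∈ Q, (∫ ω, χ ω * (d.x p.1 p.2 l ω * d.x p.1 p.2 l ω) ∂d.P) * Cs :=
        Finset.sum_le_sum fun p _ =>
          mul_le_mul_of_nonneg_left (hCs p.1).le (hint_nonneg p)
      have step2 : ∑ p ∈ Q, (∫ ω, χ ω * (d.x p.1 p.2 l ω * d.x p.1 p.2 l ω) ∂d.P) * Cs
          = Cs * ∫ ω, χ ω * Sll n ω l ∂d.P := by
        rw [← Finset.sum_mul, mul_comm]
        congr 1
        rw [← integral_finset_sum Q (fun p hp => hFint p hp p hp)]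
        congr 1
        funext ω
        rw [hSQ ω, Finset.mul_sum]
      have hchiSint : Integrable (fun ω => χ ω * Sll n ω l) d.P := by
        have hfe2 : (fun ω => χ ω * Sll n ω l) = fun ω =>
            ∑ p ∈ Q, χ ω * (d.x p.1 p.2 l ω * d.x p.1 p.2 l ω) := by
          funext ω
          rw [hSQ ω, Finset.mul_sum]
        rw [hfe2]
        exact integrable_finset_sum Q fun p hp => hFint p hp p hp
      have step3 : ∫ ω, χ ω * Sll n ω l ∂d.P ≤ D l * r := by
        have hb : ∀ ω, χ ω * Sll n ω l ≤ D l * r := by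
          intro ω
          rw [hχ]; dsimp only
          split
          case isTrue h =>
            rw [one_mul, hSQ ω]
            exact h
          case isFalse h =>
            rw [zero_mul]
            exact hDr
        calc ∫ ω, χ ω * Sll n ω l ∂d.P ≤ ∫ _ω, D l * r ∂d.P :=
              integral_mono hchiSint (integrable_const _) hb
          _ = D l * r := by simp
      calc ∑ p ∈ Q, (∫ ω, χ ω * (d.x p.1 p.2 l ω * d.x p.1 p.2 l ω) ∂d.P) * d.σ2 p.1
          ≤ Cs * ∫ ω, χ ω * Sll n ω l ∂d.P := step1.trans_eq step2
        _ ≤ Cs * (D l * r) := mul_le_mul_of_nonneg_left step3 hCspos.le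
    -- Markov
    have hM := mul_meas_ge_le_integral_of_nonneg
      (ae_of_all _ fun ω => mul_nonneg (hχnonneg ω) (mul_self_nonneg _)) hInt1
      ((C2 l) ^ 2 * r)
    have hss : ({ω | C2 l * Real.sqrt r ≤ |w2 n ω l|} ∩ {ω | Sll n ω l ≤ D l * r}) ⊆
        {ω | (C2 l) ^ 2 * r ≤ χ ω * (w2 n ω l * w2 n ω l)} := by
      rintro ω ⟨h1, h2⟩
      have hχ1 : χ ω = 1 := by
        rw [hχ]; dsimp only
        rw [if_pos]
        rw [← hSQ ω]
        exact h2
      simp only [Set.mem_setOf_eq]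
      rw [hχ1, one_mul]
      have hsq1 : (C2 l * Real.sqrt r) ^ 2 ≤ |w2 n ω l| ^ 2 :=
        pow_le_pow_left₀ (mul_nonneg (hC2pos l).le (Real.sqrt_nonneg _)) h1 2
      have hsq2 : (C2 l * Real.sqrt r) ^ 2 = (C2 l) ^ 2 * r := by
        rw [mul_pow, Real.sq_sqrt hrpos.le]
      have hsq3 : |w2 n ω l| ^ 2 = w2 n ω l * w2 n ω l := by
        rw [sq_abs, pow_two]
      linarith
    have hc2rpos : 0 < (C2 l) ^ 2 * r := mul_pos (pow_pos (hC2pos l) 2) hrpos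
    have htoReal : (d.P {ω | (C2 l) ^ 2 * r ≤ χ ω * (w2 n ω l * w2 n ω l)}).toReal ≤ δ := by
      have h2 : (C2 l) ^ 2 * r *
          (d.P {ω | (C2 l) ^ 2 * r ≤ χ ω * (w2 n ω l * w2 n ω l)}).toReal
          ≤ Cs * (D l * r) := hM.trans hIntLe
      have h3 : (d.P {ω | (C2 l) ^ 2 * r ≤ χ ω * (w2 n ω l * w2 n ω l)}).toReal
          ≤ Cs * (D l * r) / ((C2 l) ^ 2 * r) := by
        rw [le_div_iff₀ hc2rpos]
        linarith
      have h4 : Cs * (D l * r) / ((C2 l) ^ 2 * r) = Cs * D l / (C2 l) ^ 2 := by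
        field_simp [(hC2pos l).ne', hrpos.ne']
      rw [h4] at h3
      exact h3.trans (hC2key l)
    calc d.P ({ω | C2 l * Real.sqrt r ≤ |w2 n ω l|} ∩ {ω | Sll n ω l ≤ D l * r})
        ≤ d.P {ω | (C2 l) ^ 2 * r ≤ χ ω * (w2 n ω l * w2 n ω l)} := measure_mono hss
      _ ≤ ENNReal.ofReal δ := by
          rw [← ENNReal.ofReal_toReal (measure_ne_top d.P _)]
          exact ENNReal.ofReal_le_ofReal htoReal
  -- the pointwise bound on the good event
  have hkey : ∀ n, 1 ≤ d.N n → 1 ≤ d.T n → 1 ≤ M n → (1:ℝ) ≤ d.γ n → ∀ ω : Ω,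
      ¬(|A.det| ≤ |(Bbar n ω).det - A.det|) →
      (∀ l, ¬((1:ℝ) ≤ |(Bbar n ω)⁻¹ k l - A⁻¹ k l|)) →
      (∀ l, ¬((1:ℝ) ≤ |(∑ m, lam2 m * (((M n : ℝ) * d.T n)⁻¹ * ∑ i ∈ G2 n,
        ∑ t ∈ Finset.range (d.T n), d.x i t l ω * d.x i t m ω)) - ∑ m, lam2 m * A2 l m|)) →
      (∀ l, ¬(C2 l * Real.sqrt ((d.N n : ℝ) * d.T n) ≤ |w2 n ω l|)) →
      |d.betaLS n ω k - d.β k| ≤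
        C * |(M n : ℝ) / ((d.N n : ℝ) * d.γ n) + (Real.sqrt ((d.N n : ℝ) * (d.T n : ℝ)))⁻¹| := by
    intro n hN hT hM1 hγR ω h0 h1 h2 h3
    have hNR : (1:ℝ) ≤ (d.N n : ℝ) := by exact_mod_cast hN
    have hTR : (1:ℝ) ≤ (d.T n : ℝ) := by exact_mod_cast hT
    have hMR : (1:ℝ) ≤ (M n : ℝ) := by exact_mod_cast hM1
    have hrpos : 0 < (d.N n : ℝ) * d.T n := by nlinarith
    have hγpos : (0:ℝ) < d.γ n := lt_of_lt_of_le one_pos hγR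
    have hMTpos : 0 < (M n : ℝ) * d.T n := by nlinarith
    have haM : 0 ≤ (M n : ℝ) / ((d.N n : ℝ) * d.γ n) :=
      div_nonneg (Nat.cast_nonneg _) (by nlinarith)
    have haS : 0 ≤ (Real.sqrt ((d.N n : ℝ) * (d.T n : ℝ)))⁻¹ :=
      inv_nonneg.mpr (Real.sqrt_nonneg _)
    have haeq : |(M n : ℝ) / ((d.N n : ℝ) * d.γ n) +
        (Real.sqrt ((d.N n : ℝ) * (d.T n : ℝ)))⁻¹| =
        (M n : ℝ) / ((d.N n : ℝ) * d.γ n) + (Real.sqrt ((d.N n : ℝ) * (d.T n : ℝ)))⁻¹ :=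
      abs_of_nonneg (add_nonneg haM haS)
    -- the determinant of Bbar is nonzero
    have hdetB : (Bbar n ω).det ≠ 0 := by
      intro hz
      exact h0 (by rw [hz, zero_sub, abs_neg])
    -- relation between the raw Gram matrix and Bbar
    have hBrel : (∑ i ∈ Finset.range (d.N n), d.XtX n i ω) =
        ((d.N n : ℝ) * d.T n) • Bbar n ω := by
      rw [hBbar, hXb]
      ext a b
      simp only [Matrix.sum_apply, PanelCore.XtX, Matrix.of_apply, Matrix.smul_apply,
        smul_eq_mul]
      rw [← mul_assoc, mul_inv_cancel₀ hrpos.ne', one_mul]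
    have hdetBmat : IsUnit (∑ i ∈ Finset.range (d.N n), d.XtX n i ω).det := by
      rw [hBrel, Matrix.det_smul]
      exact (mul_ne_zero (pow_ne_zero _ hrpos.ne') hdetB).isUnit
    have hBinv : (∑ i ∈ Finset.range (d.N n), d.XtX n i ω)⁻¹ =
        ((d.N n : ℝ) * d.T n)⁻¹ • (Bbar n ω)⁻¹ := by
      rw [hBrel, smul_inv_mat hK _ hrpos.ne']
    -- scalar formula for the estimation error
    have hbeta : d.betaLS n ω k - d.β k =
        ∑ l, (Bbar n ω)⁻¹ k l * (((d.N n : ℝ) * d.T n)⁻¹ *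
          ((d.γ n)⁻¹ * (∑ i ∈ G2 n, ∑ m, (∑ t ∈ Finset.range (d.T n),
            d.x i t l ω * d.x i t m ω) * lam2 m) + w2 n ω l)) := by
      have hmv1 : d.betaLS n ω k = ∑ l,
          (∑ i ∈ Finset.range (d.N n), d.XtX n i ω)⁻¹ k l *
            (∑ i ∈ Finset.range (d.N n), d.Xty n i ω l) := by
        simp only [PanelCore.betaLS, Matrix.mulVec, dotProduct]
        refine Finset.sum_congr rfl fun l _ => ?_
        rw [Finset.sum_apply]
      have hone : (∑ l, (∑ i ∈ Finset.range (d.N n), d.XtX n i ω)⁻¹ k l *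
          (((∑ i ∈ Finset.range (d.N n), d.XtX n i ω).mulVec d.β) l)) = d.β k := by
        have h6 : ((∑ i ∈ Finset.range (d.N n), d.XtX n i ω)⁻¹.mulVec
            ((∑ i ∈ Finset.range (d.N n), d.XtX n i ω).mulVec d.β)) k
            = ∑ l, (∑ i ∈ Finset.range (d.N n), d.XtX n i ω)⁻¹ k l *
              (((∑ i ∈ Finset.range (d.N n), d.XtX n i ω).mulVec d.β) l) := rfl
        rw [← h6, Matrix.mulVec_mulVec, Matrix.nonsing_inv_mul _ hdetBmat,
          Matrix.one_mulVec]
      calc d.betaLS n ω k - d.β k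
          = (∑ l, (∑ i ∈ Finset.range (d.N n), d.XtX n i ω)⁻¹ k l *
              (((∑ i ∈ Finset.range (d.N n), d.XtX n i ω).mulVec d.β) l +
              ((d.γ n)⁻¹ * (∑ i ∈ G2 n, ∑ m, (∑ t ∈ Finset.range (d.T n),
                d.x i t l ω * d.x i t m ω) * lam2 m) + w2 n ω l))) - d.β k := by
            rw [hmv1]
            congr 1
            refine Finset.sum_congr rfl fun l _ => ?_
            rw [hdecomp n ω l]
            ring
        _ = (∑ l, (∑ i ∈ Finset.range (d.N n), d.XtX n i ω)⁻¹ k l *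
              (((∑ i ∈ Finset.range (d.N n), d.XtX n i ω).mulVec d.β) l)) +
            (∑ l, (∑ i ∈ Finset.range (d.N n), d.XtX n i ω)⁻¹ k l *
              ((d.γ n)⁻¹ * (∑ i ∈ G2 n, ∑ m, (∑ t ∈ Finset.range (d.T n),
                d.x i t l ω * d.x i t m ω) * lam2 m) + w2 n ω l)) - d.β k := by
            rw [← Finset.sum_add_distrib]
            congr 1
            refine Finset.sum_congr rfl fun l _ => ?_
            ring
        _ = ∑ l, (∑ i ∈ Finset.range (d.N n), d.XtX n i ω)⁻¹ k l *
              ((d.γ n)⁻¹ * (∑ i ∈ G2 n, ∑ m, (∑ t ∈ Finset.range (d.T n),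
                d.x i t l ω * d.x i t m ω) * lam2 m) + w2 n ω l) := by
            rw [hone]
            ring
        _ = ∑ l, (Bbar n ω)⁻¹ k l * (((d.N n : ℝ) * d.T n)⁻¹ *
              ((d.γ n)⁻¹ * (∑ i ∈ G2 n, ∑ m, (∑ t ∈ Finset.range (d.T n),
                d.x i t l ω * d.x i t m ω) * lam2 m) + w2 n ω l)) := by
            refine Finset.sum_congr rfl fun l _ => ?_
            rw [hBinv, Matrix.smul_apply, smul_eq_mul]
            ring
    -- per-coordinate bounds
    have hsqrtpos : 0 < Real.sqrt ((d.N n : ℝ) * d.T n) := Real.sqrt_pos.mpr hrpos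
    have hperl : ∀ l, |((d.N n : ℝ) * d.T n)⁻¹ *
        ((d.γ n)⁻¹ * (∑ i ∈ G2 n, ∑ m, (∑ t ∈ Finset.range (d.T n),
          d.x i t l ω * d.x i t m ω) * lam2 m) + w2 n ω l)| ≤
        (c0 l + C2 l) * ((M n : ℝ) / ((d.N n : ℝ) * d.γ n) +
          (Real.sqrt ((d.N n : ℝ) * (d.T n : ℝ)))⁻¹) := by
      intro l
      -- the lambda part
      have hZrel : (∑ i ∈ G2 n, ∑ m, (∑ t ∈ Finset.range (d.T n),
          d.x i t l ω * d.x i t m ω) * lam2 m) = ((M n : ℝ) * d.T n) *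
          (∑ m, lam2 m * (((M n : ℝ) * d.T n)⁻¹ * ∑ i ∈ G2 n,
            ∑ t ∈ Finset.range (d.T n), d.x i t l ω * d.x i t m ω)) := by
        rw [Finset.sum_comm, Finset.mul_sum]
        refine Finset.sum_congr rfl fun mm _ => ?_
        rw [← Finset.sum_mul]
        field_simp
      have hZbd : |∑ m, lam2 m * (((M n : ℝ) * d.T n)⁻¹ * ∑ i ∈ G2 n,
          ∑ t ∈ Finset.range (d.T n), d.x i t l ω * d.x i t m ω)| ≤ c0 l := by
        have h2l := h2 l
        push_neg at h2l
        have htri := abs_sub_abs_le_abs_sub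
          (∑ m, lam2 m * (((M n : ℝ) * d.T n)⁻¹ * ∑ i ∈ G2 n,
            ∑ t ∈ Finset.range (d.T n), d.x i t l ω * d.x i t m ω))
          (∑ m, lam2 m * A2 l m)
        rw [hc0eq l]
        linarith
      have hw2bd : |w2 n ω l| ≤ C2 l * Real.sqrt ((d.N n : ℝ) * d.T n) := by
        have h3l := h3 l
        push_neg at h3l
        exact h3l.le
      -- combine
      have e1 : |((d.N n : ℝ) * d.T n)⁻¹ *
          ((d.γ n)⁻¹ * (∑ i ∈ G2 n, ∑ m, (∑ t ∈ Finset.range (d.T n),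
            d.x i t l ω * d.x i t m ω) * lam2 m) + w2 n ω l)|
          ≤ ((d.N n : ℝ) * d.T n)⁻¹ * ((d.γ n)⁻¹ *
            (((M n : ℝ) * d.T n) * c0 l) + C2 l * Real.sqrt ((d.N n : ℝ) * d.T n)) := by
        rw [abs_mul, abs_of_nonneg (inv_nonneg.mpr hrpos.le)]
        apply mul_le_mul_of_nonneg_left _ (inv_nonneg.mpr hrpos.le)
        refine (abs_add_le _ _).trans ?_
        apply add_le_add _ hw2bd
        rw [hZrel, abs_mul, abs_mul, abs_of_nonneg (inv_pos.mpr hγpos).le,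
          abs_of_nonneg hMTpos.le]
        apply mul_le_mul_of_nonneg_left _ (inv_pos.mpr hγpos).le
        exact mul_le_mul_of_nonneg_left hZbd hMTpos.le
      have e2 : ((d.N n : ℝ) * d.T n)⁻¹ * ((d.γ n)⁻¹ * (((M n : ℝ) * d.T n) * c0 l))
          = c0 l * ((M n : ℝ) / ((d.N n : ℝ) * d.γ n)) := by
        field_simp
      have e3 : ((d.N n : ℝ) * d.T n)⁻¹ * (C2 l * Real.sqrt ((d.N n : ℝ) * d.T n))
          = C2 l * (Real.sqrt ((d.N n : ℝ) * (d.T n : ℝ)))⁻¹ := by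
        rw [mul_comm (C2 l), ← mul_assoc, mul_comm _ (Real.sqrt _)]
        have : ((d.N n : ℝ) * d.T n)⁻¹ * Real.sqrt ((d.N n : ℝ) * d.T n)
            = (Real.sqrt ((d.N n : ℝ) * (d.T n : ℝ)))⁻¹ := by
          nth_rewrite 1 [← Real.mul_self_sqrt hrpos.le]
          rw [mul_inv]
          rw [mul_assoc, inv_mul_cancel₀ hsqrtpos.ne', mul_one]
        rw [mul_comm (Real.sqrt _) _, this]
        ring
      have e4 : c0 l * ((M n : ℝ) / ((d.N n : ℝ) * d.γ n)) +
          C2 l * (Real.sqrt ((d.N n : ℝ) * (d.T n : ℝ)))⁻¹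
          ≤ (c0 l + C2 l) * ((M n : ℝ) / ((d.N n : ℝ) * d.γ n) +
            (Real.sqrt ((d.N n : ℝ) * (d.T n : ℝ)))⁻¹) := by
        have := (hc0pos l).le
        have := (hC2pos l).le
        nlinarith
      calc |((d.N n : ℝ) * d.T n)⁻¹ *
          ((d.γ n)⁻¹ * (∑ i ∈ G2 n, ∑ m, (∑ t ∈ Finset.range (d.T n),
            d.x i t l ω * d.x i t m ω) * lam2 m) + w2 n ω l)|
          ≤ ((d.N n : ℝ) * d.T n)⁻¹ * ((d.γ n)⁻¹ *
            (((M n : ℝ) * d.T n) * c0 l) + C2 l * Real.sqrt ((d.N n : ℝ) * d.T n)) := e1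
        _ = c0 l * ((M n : ℝ) / ((d.N n : ℝ) * d.γ n)) +
            C2 l * (Real.sqrt ((d.N n : ℝ) * (d.T n : ℝ)))⁻¹ := by
            rw [mul_add, e3, ← e2]
        _ ≤ (c0 l + C2 l) * ((M n : ℝ) / ((d.N n : ℝ) * d.γ n) +
            (Real.sqrt ((d.N n : ℝ) * (d.T n : ℝ)))⁻¹) := e4
    have hinvbd : ∀ l, |(Bbar n ω)⁻¹ k l| ≤ c1 l := by
      intro l
      have h1l := h1 l
      push_neg at h1l
      have htri := abs_sub_abs_le_abs_sub ((Bbar n ω)⁻¹ k l) (A⁻¹ k l)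
      rw [hc1eq l]
      linarith
    rw [hbeta, haeq]
    refine (Finset.abs_sum_le_sum_abs _ _).trans ?_
    have hsum : ∑ l, |(Bbar n ω)⁻¹ k l * (((d.N n : ℝ) * d.T n)⁻¹ *
        ((d.γ n)⁻¹ * (∑ i ∈ G2 n, ∑ m, (∑ t ∈ Finset.range (d.T n),
          d.x i t l ω * d.x i t m ω) * lam2 m) + w2 n ω l))|
        ≤ ∑ l, c1 l * ((c0 l + C2 l) * ((M n : ℝ) / ((d.N n : ℝ) * d.γ n) +
          (Real.sqrt ((d.N n : ℝ) * (d.T n : ℝ)))⁻¹)) := by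
      refine Finset.sum_le_sum fun l _ => ?_
      rw [abs_mul]
      exact mul_le_mul (hinvbd l) (hperl l) (abs_nonneg _)
        (hc1pos l).le
    refine hsum.trans ?_
    have hCoef : ∑ l, c1 l * ((c0 l + C2 l) * ((M n : ℝ) / ((d.N n : ℝ) * d.γ n) +
        (Real.sqrt ((d.N n : ℝ) * (d.T n : ℝ)))⁻¹))
        = (∑ l, c1 l * (c0 l + C2 l)) * ((M n : ℝ) / ((d.N n : ℝ) * d.γ n) +
          (Real.sqrt ((d.N n : ℝ) * (d.T n : ℝ)))⁻¹) := by
      rw [Finset.sum_mul]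
      refine Finset.sum_congr rfl fun l _ => ?_
      ring
    rw [hCoef, hCeq]
    have hcoef_nonneg : (0:ℝ) ≤ ∑ l, c1 l * (c0 l + C2 l) :=
      Finset.sum_nonneg fun l _ =>
        mul_nonneg (hc1pos l).le (add_nonneg (hc0pos l).le (hC2pos l).le)
    nlinarith [add_nonneg haM haS]
  -- eventual smallness of the bad events
  have hE0 := evtl_le_of_tendsto_zero (hdet |A.det| (abs_pos.mpr hdetA)) hδpos
  have hE1 : ∀ᶠ n in atTop, ∀ l, d.P {ω | (1:ℝ) ≤ |(Bbar n ω)⁻¹ k l - A⁻¹ k l|} ≤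
      ENNReal.ofReal δ :=
    eventually_all.mpr fun l => evtl_le_of_tendsto_zero (hinv l 1 one_pos) hδpos
  have hE2 : ∀ᶠ n in atTop, ∀ l, d.P {ω | (1:ℝ) ≤
      |(∑ m, lam2 m * (((M n : ℝ) * d.T n)⁻¹ * ∑ i ∈ G2 n,
        ∑ t ∈ Finset.range (d.T n), d.x i t l ω * d.x i t m ω)) -
        ∑ m, lam2 m * A2 l m|} ≤ ENNReal.ofReal δ :=
    eventually_all.mpr fun l => evtl_le_of_tendsto_zero (hZ1 l 1 one_pos) hδpos
  have hE4 : ∀ᶠ n in atTop, ∀ l, d.P {ω | (1:ℝ) ≤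
      |((d.N n : ℝ) * d.T n)⁻¹ * (∑ i ∈ Finset.range (d.N n),
        ∑ t ∈ Finset.range (d.T n), d.x i t l ω * d.x i t l ω) - A l l|} ≤
      ENNReal.ofReal δ :=
    eventually_all.mpr fun l => evtl_le_of_tendsto_zero (hAlim l l 1 one_pos) hδpos
  filter_upwards [hE0, hE1, hE2, hE4,
    hA.N_tendsto.eventually_ge_atTop 1, hA.T_tendsto.eventually_ge_atTop 1,
    hH.M_tendsto.eventually_ge_atTop 1, hH.γ_tendsto.eventually_ge_atTop 1]
    with n h0 h1 h2 h4 hN hT hM1 hγ1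
  have hNR : (1:ℝ) ≤ (d.N n : ℝ) := by exact_mod_cast hN
  have hTR : (1:ℝ) ≤ (d.T n : ℝ) := by exact_mod_cast hT
  have hrpos : 0 < (d.N n : ℝ) * d.T n := by nlinarith
  -- the inclusion into the union of bad events
  have hsub : {ω | C * |(M n : ℝ) / ((d.N n : ℝ) * d.γ n) +
        (Real.sqrt ((d.N n : ℝ) * (d.T n : ℝ)))⁻¹| < |d.betaLS n ω k - d.β k|} ⊆
      {ω | |A.det| ≤ |(Bbar n ω).det - A.det|} ∪
      ⋃ l ∈ (Finset.univ : Finset (Fin K)),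
        ({ω | (1:ℝ) ≤ |(Bbar n ω)⁻¹ k l - A⁻¹ k l|} ∪
         {ω | (1:ℝ) ≤ |(∑ m, lam2 m * (((M n : ℝ) * d.T n)⁻¹ * ∑ i ∈ G2 n,
            ∑ t ∈ Finset.range (d.T n), d.x i t l ω * d.x i t m ω)) -
            ∑ m, lam2 m * A2 l m|} ∪
         ({ω | (1:ℝ) ≤ |((d.N n : ℝ) * d.T n)⁻¹ * (∑ i ∈ Finset.range (d.N n),
            ∑ t ∈ Finset.range (d.T n), d.x i t l ω * d.x i t l ω) - A l l|} ∪
          ({ω | C2 l * Real.sqrt ((d.N n : ℝ) * d.T n) ≤ |w2 n ω l|} ∩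
           {ω | Sll n ω l ≤ D l * ((d.N n : ℝ) * d.T n)}))) := by
    intro ω hω
    by_contra hcon
    simp only [Set.mem_union, Set.mem_iUnion, Set.mem_inter_iff, Set.mem_setOf_eq,
      not_or, not_exists, exists_prop, Finset.mem_univ, true_and, not_and,
      not_le] at hcon
    obtain ⟨hc0, hcl⟩ := hcon
    have hn1 : ∀ l, ¬((1:ℝ) ≤ |(Bbar n ω)⁻¹ k l - A⁻¹ k l|) := fun l =>
      not_le.mpr (hcl l).1.1
    have hn2 : ∀ l, ¬((1:ℝ) ≤ |(∑ m, lam2 m * (((M n : ℝ) * d.T n)⁻¹ * ∑ i ∈ G2 n,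
        ∑ t ∈ Finset.range (d.T n), d.x i t l ω * d.x i t m ω)) -
        ∑ m, lam2 m * A2 l m|) := fun l => not_le.mpr (hcl l).1.2
    have hn3 : ∀ l, ¬(C2 l * Real.sqrt ((d.N n : ℝ) * d.T n) ≤ |w2 n ω l|) := by
      intro l hE3
      have hnE4 := (hcl l).2.1
      have hnE34 := (hcl l).2.2
      have hGx : Sll n ω l ≤ D l * ((d.N n : ℝ) * d.T n) := by
        rw [hSllDef]
        have habs : |((d.N n : ℝ) * d.T n)⁻¹ * (∑ i ∈ Finset.range (d.N n),
            ∑ t ∈ Finset.range (d.T n), d.x i t l ω * d.x i t l ω) - A l l| < 1 := hnE4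
        have h5 := (abs_lt.mp habs).2
        have h6 : ((d.N n : ℝ) * d.T n)⁻¹ * (∑ i ∈ Finset.range (d.N n),
            ∑ t ∈ Finset.range (d.T n), d.x i t l ω * d.x i t l ω) ≤ |A l l| + 1 := by
          have := le_abs_self (A l l)
          linarith
        have h7 := mul_le_mul_of_nonneg_left h6 hrpos.le
        rw [← mul_assoc, mul_inv_cancel₀ hrpos.ne', one_mul] at h7
        rw [hDeq l]
        linarith [h7]
      exact absurd hGx (not_le.mpr (hnE34 hE3))
    have hbd := hkey n hN hT hM1 (by exact_mod_cast hγ1) ω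
      (not_le.mpr hc0) hn1 hn2 hn3
    simp only [Set.mem_setOf_eq] at hω
    linarith
  -- assemble the probability bound
  refine (measure_mono hsub).trans ?_
  refine (measure_union_le _ _).trans ?_
  have hUnion : d.P (⋃ l ∈ (Finset.univ : Finset (Fin K)),
      ({ω | (1:ℝ) ≤ |(Bbar n ω)⁻¹ k l - A⁻¹ k l|} ∪
       {ω | (1:ℝ) ≤ |(∑ m, lam2 m * (((M n : ℝ) * d.T n)⁻¹ * ∑ i ∈ G2 n,
          ∑ t ∈ Finset.range (d.T n), d.x i t l ω * d.x i t m ω)) -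
          ∑ m, lam2 m * A2 l m|} ∪
       ({ω | (1:ℝ) ≤ |((d.N n : ℝ) * d.T n)⁻¹ * (∑ i ∈ Finset.range (d.N n),
          ∑ t ∈ Finset.range (d.T n), d.x i t l ω * d.x i t l ω) - A l l|} ∪
        ({ω | C2 l * Real.sqrt ((d.N n : ℝ) * d.T n) ≤ |w2 n ω l|} ∩
         {ω | Sll n ω l ≤ D l * ((d.N n : ℝ) * d.T n)}))))
      ≤ ∑ _l ∈ (Finset.univ : Finset (Fin K)),
        (ENNReal.ofReal δ + ENNReal.ofReal δ + (ENNReal.ofReal δ + ENNReal.ofReal δ)) := by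
    refine (measure_biUnion_finset_le _ _).trans ?_
    refine Finset.sum_le_sum fun l _ => ?_
    refine (measure_union_le _ _).trans ?_
    refine add_le_add ((measure_union_le _ _).trans (add_le_add (h1 l) (h2 l))) ?_
    refine (measure_union_le _ _).trans ?_
    exact add_le_add (h4 l) (hMarkov l n hN hT)
  refine (add_le_add h0 hUnion).trans ?_
  -- numeric arithmetic in ℝ≥0∞
  rw [Finset.sum_const, Finset.card_univ, Fintype.card_fin]
  have hδ4 : ENNReal.ofReal δ + ENNReal.ofReal δ + (ENNReal.ofReal δ + ENNReal.ofReal δ)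
      = ENNReal.ofReal (4 * δ) := by
    rw [← ENNReal.ofReal_add hδpos.le hδpos.le,
      ← ENNReal.ofReal_add (by linarith : (0:ℝ) ≤ δ + δ) (by linarith : (0:ℝ) ≤ δ + δ)]
    congr 1
    ring
  rw [hδ4, nsmul_eq_mul, ← ENNReal.ofReal_natCast K,
    ← ENNReal.ofReal_mul (Nat.cast_nonneg K),
    ← ENNReal.ofReal_add hδpos.le (by positivity)]
  apply ENNReal.ofReal_le_ofReal
  rw [hδeq]
  have hKpos : (0:ℝ) < 4 * (K:ℝ) + 1 := by positivity
  have heq : ε / (4 * (K:ℝ) + 1) + (K:ℝ) * (4 * (ε / (4 * (K:ℝ) + 1))) = ε := by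
    field_simp
    ring
  exact le_of_eq heq
end
end

section
/- (PY dispersion decomposition identity.) Suppose y_i = x_iβ + u_i with u_i = x_iλ_i + ε_i for i = 1,…,N, where x_i is a T×K real matrix with x_i'x_i invertible, σ̃_i² > 0 are scalars, and A = Σ_i x_i'x_i/σ̃_i² is invertible. Let β̂_i = (x_i'x_i)^{-1}x_i'y_i, β̂_WLS = A^{-1} Σ_i x_i'y_i/σ̃_i², and S_PY = Σ_i (β̂_i − β̂_WLS)'(x_i'x_i/σ̃_i²)(β̂_i − β̂_WLS). Then S_PY = Σ_i ε_i'x_i(x_i'x_i)^{-1}x_i'ε_i/σ̃_i² + Σ_i λ_i'x_i'x_iλ_i/σ̃_i² + R + C, where R = −(Σ_i λ_i'x_i'x_i/σ̃_i²) A^{-1} (Σ_i x_i'x_iλ_i/σ̃_i²) − (Σ_i ε_i'x_i/σ̃_i²) A^{-1} (Σ_i x_i'ε_i/σ̃_i²) and C = 2 Σ_i ε_i'x_iλ_i/σ̃_i² − 2 (Σ_i ε_i'x_i/σ̃_i²) A^{-1} (Σ_i x_i'x_iλ_i/σ̃_i²). -/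
open MeasureTheory ProbabilityTheory Filter Matrix Finset
open scoped BigOperators NNReal ENNReal Classical Topology

noncomputable section

private lemma sum_mulVec' {n K : ℕ} (f : Fin n → Matrix (Fin K) (Fin K) ℝ) (v : Fin K → ℝ) :
    (∑ i, f i) *ᵥ v = ∑ i, f i *ᵥ v := by
  ext j
  simp only [Matrix.mulVec, dotProduct, Matrix.sum_apply, Finset.sum_apply,
    Finset.sum_mul]
  rw [Finset.sum_comm]

private lemma sum_dotProduct' {n K : ℕ} (f : Fin n → Fin K → ℝ) (v : Fin K → ℝ) :
    (∑ i, f i) ⬝ᵥ v = ∑ i, f i ⬝ᵥ v := by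
  simp only [dotProduct, Finset.sum_apply, Finset.sum_mul]
  rw [Finset.sum_comm]

private lemma dotProduct_sum' {n K : ℕ} (v : Fin K → ℝ) (f : Fin n → Fin K → ℝ) :
    v ⬝ᵥ (∑ i, f i) = ∑ i, v ⬝ᵥ f i := by
  rw [dotProduct_comm, sum_dotProduct']
  exact Finset.sum_congr rfl fun i _ => dotProduct_comm _ _

private lemma symdot {K : ℕ} (M : Matrix (Fin K) (Fin K) ℝ) (hM : Mᵀ = M)
    (v w : Fin K → ℝ) : v ⬝ᵥ M *ᵥ w = (M *ᵥ v) ⬝ᵥ w := by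
  rw [Matrix.dotProduct_mulVec, ← Matrix.mulVec_transpose, hM]

/-- **PY dispersion decomposition identity.**  The Swamy-type dispersion statistic
`S_PY` splits into a null term, a power term, and the remainders `R`, `C`. -/
theorem py_dispersion_decomposition
    (N T K : ℕ) (x : Fin N → Matrix (Fin T) (Fin K) ℝ)
    (ε : Fin N → Fin T → ℝ) (lam : Fin N → Fin K → ℝ) (β : Fin K → ℝ)
    (σ : Fin N → ℝ) (hσ : ∀ i, 0 < σ i)
    (hx : ∀ i, IsUnit ((x i)ᵀ * x i).det)
    (A : Matrix (Fin K) (Fin K) ℝ) (hA : A = ∑ i, (σ i)⁻¹ • ((x i)ᵀ * x i))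
    (hAu : IsUnit A.det)
    (u y : Fin N → Fin T → ℝ)
    (hu : ∀ i, u i = (x i).mulVec (lam i) + ε i)
    (hy : ∀ i, y i = (x i).mulVec β + u i)
    (βhat : Fin N → Fin K → ℝ)
    (hβ : ∀ i, βhat i = ((x i)ᵀ * x i)⁻¹.mulVec ((x i)ᵀ.mulVec (y i)))
    (βw : Fin K → ℝ)
    (hβw : βw = A⁻¹.mulVec (∑ i, (σ i)⁻¹ • (x i)ᵀ.mulVec (y i)))
    (Spy : ℝ)
    (hS : Spy = ∑ i, (βhat i - βw) ⬝ᵥ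
        (((σ i)⁻¹ • ((x i)ᵀ * x i)).mulVec (βhat i - βw)))
    (R C : ℝ)
    (hR : R = -((∑ i, (σ i)⁻¹ • (((x i)ᵀ * x i).mulVec (lam i))) ⬝ᵥ
            A⁻¹.mulVec (∑ i, (σ i)⁻¹ • (((x i)ᵀ * x i).mulVec (lam i))))
        - ((∑ i, (σ i)⁻¹ • ((x i)ᵀ.mulVec (ε i))) ⬝ᵥ
            A⁻¹.mulVec (∑ i, (σ i)⁻¹ • ((x i)ᵀ.mulVec (ε i)))))
    (hC : C = 2 * (∑ i, (σ i)⁻¹ * (ε i ⬝ᵥ (x i).mulVec (lam i)))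
        - 2 * ((∑ i, (σ i)⁻¹ • ((x i)ᵀ.mulVec (ε i))) ⬝ᵥ
            A⁻¹.mulVec (∑ i, (σ i)⁻¹ • (((x i)ᵀ * x i).mulVec (lam i))))) :
    Spy = (∑ i, (σ i)⁻¹ * (ε i ⬝ᵥ (x i * ((x i)ᵀ * x i)⁻¹ * (x i)ᵀ).mulVec (ε i)))
      + (∑ i, (σ i)⁻¹ * (lam i ⬝ᵥ (((x i)ᵀ * x i).mulVec (lam i))))
      + R + C := by
  classical
  have hPsym : ∀ i, ((x i)ᵀ * x i)ᵀ = (x i)ᵀ * x i := fun i => by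
    rw [Matrix.transpose_mul, Matrix.transpose_transpose]
  have hPP : ∀ i, ((x i)ᵀ * x i) * ((x i)ᵀ * x i)⁻¹ = 1 :=
    fun i => Matrix.mul_nonsing_inv _ (hx i)
  have hPPi : ∀ i, ((x i)ᵀ * x i)⁻¹ * ((x i)ᵀ * x i) = 1 :=
    fun i => Matrix.nonsing_inv_mul _ (hx i)
  have key1 : ∀ i (v : Fin K → ℝ),
      ((x i)ᵀ * x i) *ᵥ (((x i)ᵀ * x i)⁻¹ *ᵥ v) = v := by
    intro i v
    rw [Matrix.mulVec_mulVec v ((x i)ᵀ * x i) ((x i)ᵀ * x i)⁻¹, hPP, Matrix.one_mulVec]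
  have key2 : ∀ i (v : Fin K → ℝ),
      ((x i)ᵀ * x i)⁻¹ *ᵥ (((x i)ᵀ * x i) *ᵥ v) = v := by
    intro i v
    rw [Matrix.mulVec_mulVec v ((x i)ᵀ * x i)⁻¹ ((x i)ᵀ * x i), hPPi, Matrix.one_mulVec]
  have dotx : ∀ i (v : Fin K → ℝ), ε i ⬝ᵥ x i *ᵥ v = ((x i)ᵀ *ᵥ ε i) ⬝ᵥ v := by
    intro i v
    rw [Matrix.dotProduct_mulVec, ← Matrix.mulVec_transpose]
  set dl : Fin K → ℝ := ∑ i, (σ i)⁻¹ • (((x i)ᵀ * x i) *ᵥ lam i) with hdl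
  set de : Fin K → ℝ := ∑ i, (σ i)⁻¹ • ((x i)ᵀ *ᵥ ε i) with hde
  set a : Fin N → Fin K → ℝ :=
    fun i => lam i + ((x i)ᵀ * x i)⁻¹ *ᵥ ((x i)ᵀ *ᵥ ε i) with hadef
  set w : Fin K → ℝ := A⁻¹ *ᵥ (dl + de) with hwdef
  have hAsym : Aᵀ = A := by
    rw [hA, Matrix.transpose_sum]
    exact Finset.sum_congr rfl fun i _ => by rw [Matrix.transpose_smul, hPsym]
  have hAinvsym : (A⁻¹)ᵀ = A⁻¹ := by rw [Matrix.transpose_nonsing_inv, hAsym]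
  have hAA : A * A⁻¹ = 1 := Matrix.mul_nonsing_inv _ hAu
  have hAAi : A⁻¹ * A = 1 := Matrix.nonsing_inv_mul _ hAu
  have hXty : ∀ i, (x i)ᵀ *ᵥ y i
      = ((x i)ᵀ * x i) *ᵥ β + (((x i)ᵀ * x i) *ᵥ lam i + (x i)ᵀ *ᵥ ε i) := by
    intro i
    rw [hy, hu, Matrix.mulVec_add, Matrix.mulVec_add,
      Matrix.mulVec_mulVec β (x i)ᵀ (x i), Matrix.mulVec_mulVec (lam i) (x i)ᵀ (x i)]
  have hbhat : ∀ i, βhat i = β + a i := by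
    intro i
    rw [hβ, hXty i, Matrix.mulVec_add, Matrix.mulVec_add, key2 i β, key2 i (lam i)]
  have hsum : (∑ i, (σ i)⁻¹ • ((x i)ᵀ *ᵥ y i)) = A *ᵥ β + (dl + de) := by
    rw [hA, sum_mulVec', hdl, hde, ← Finset.sum_add_distrib, ← Finset.sum_add_distrib]
    refine Finset.sum_congr rfl fun i _ => ?_
    rw [hXty, Matrix.smul_mulVec, smul_add, smul_add]
  have hbw : βw = β + w := by
    rw [hβw, hsum, Matrix.mulVec_add, hwdef,
      Matrix.mulVec_mulVec β A⁻¹ A, hAAi, Matrix.one_mulVec]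
  have hdiff : ∀ i, βhat i - βw = a i - w := by
    intro i; rw [hbhat, hbw]; abel
  have hMa : ∀ i, ((σ i)⁻¹ • ((x i)ᵀ * x i)) *ᵥ a i
      = (σ i)⁻¹ • (((x i)ᵀ * x i) *ᵥ lam i + (x i)ᵀ *ᵥ ε i) := by
    intro i
    rw [Matrix.smul_mulVec]
    simp only [hadef]
    rw [Matrix.mulVec_add, key1 i]
  have hsumMa : (∑ i, ((σ i)⁻¹ • ((x i)ᵀ * x i)) *ᵥ a i) = dl + de := by
    rw [hdl, hde, ← Finset.sum_add_distrib]
    exact Finset.sum_congr rfl fun i _ => by rw [hMa, smul_add]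
  have hsumMw : (∑ i, ((σ i)⁻¹ • ((x i)ᵀ * x i)) *ᵥ w) = dl + de := by
    rw [← sum_mulVec', ← hA, hwdef, Matrix.mulVec_mulVec (dl + de) A A⁻¹, hAA,
      Matrix.one_mulVec]
  have hMsym : ∀ i, ((σ i)⁻¹ • ((x i)ᵀ * x i))ᵀ = (σ i)⁻¹ • ((x i)ᵀ * x i) := by
    intro i; rw [Matrix.transpose_smul, hPsym]
  have expand : ∀ i, (a i - w) ⬝ᵥ ((σ i)⁻¹ • ((x i)ᵀ * x i)) *ᵥ (a i - w)
      = a i ⬝ᵥ (((σ i)⁻¹ • ((x i)ᵀ * x i)) *ᵥ a i)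
        - 2 * ((((σ i)⁻¹ • ((x i)ᵀ * x i)) *ᵥ a i) ⬝ᵥ w)
        + w ⬝ᵥ (((σ i)⁻¹ • ((x i)ᵀ * x i)) *ᵥ w) := by
    intro i
    rw [Matrix.mulVec_sub, dotProduct_sub, sub_dotProduct,
      sub_dotProduct, symdot _ (hMsym i) (a i) w,
      dotProduct_comm w ((((σ i)⁻¹ • ((x i)ᵀ * x i))) *ᵥ a i)]
    ring
  have hSpy : Spy = (∑ i, a i ⬝ᵥ (((σ i)⁻¹ • ((x i)ᵀ * x i)) *ᵥ a i)) - (dl + de) ⬝ᵥ w := by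
    rw [hS]
    calc (∑ i, (βhat i - βw) ⬝ᵥ ((σ i)⁻¹ • ((x i)ᵀ * x i)) *ᵥ (βhat i - βw))
        = ∑ i, (a i - w) ⬝ᵥ ((σ i)⁻¹ • ((x i)ᵀ * x i)) *ᵥ (a i - w) :=
          Finset.sum_congr rfl fun i _ => by rw [hdiff]
      _ = (∑ i, a i ⬝ᵥ (((σ i)⁻¹ • ((x i)ᵀ * x i)) *ᵥ a i))
          - 2 * ((∑ i, ((σ i)⁻¹ • ((x i)ᵀ * x i)) *ᵥ a i) ⬝ᵥ w)
          + w ⬝ᵥ (∑ i, ((σ i)⁻¹ • ((x i)ᵀ * x i)) *ᵥ w) := by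
          simp only [expand]
          rw [sum_dotProduct', dotProduct_sum', Finset.mul_sum,
            ← Finset.sum_sub_distrib, ← Finset.sum_add_distrib]
      _ = (∑ i, a i ⬝ᵥ (((σ i)⁻¹ • ((x i)ᵀ * x i)) *ᵥ a i)) - (dl + de) ⬝ᵥ w := by
          rw [hsumMa, hsumMw, dotProduct_comm w (dl + de)]; ring
  have t1 : ∀ i, lam i ⬝ᵥ ((x i)ᵀ *ᵥ ε i) = ε i ⬝ᵥ x i *ᵥ lam i := by
    intro i
    rw [Matrix.dotProduct_mulVec, Matrix.vecMul_transpose, dotProduct_comm]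
  have t2 : ∀ i, (((x i)ᵀ * x i)⁻¹ *ᵥ ((x i)ᵀ *ᵥ ε i)) ⬝ᵥ (((x i)ᵀ * x i) *ᵥ lam i)
      = ε i ⬝ᵥ x i *ᵥ lam i := by
    intro i
    rw [symdot _ (hPsym i), key1 i, ← t1 i, dotProduct_comm]
  have t3 : ∀ i, (((x i)ᵀ * x i)⁻¹ *ᵥ ((x i)ᵀ *ᵥ ε i)) ⬝ᵥ ((x i)ᵀ *ᵥ ε i)
      = ε i ⬝ᵥ (x i * ((x i)ᵀ * x i)⁻¹ * (x i)ᵀ) *ᵥ ε i := by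
    intro i
    have hdec : (x i * ((x i)ᵀ * x i)⁻¹ * (x i)ᵀ) *ᵥ ε i
        = x i *ᵥ (((x i)ᵀ * x i)⁻¹ *ᵥ ((x i)ᵀ *ᵥ ε i)) := by
      rw [← Matrix.mulVec_mulVec (ε i) (x i * ((x i)ᵀ * x i)⁻¹) (x i)ᵀ,
        ← Matrix.mulVec_mulVec ((x i)ᵀ *ᵥ ε i) (x i) ((x i)ᵀ * x i)⁻¹]
    rw [hdec, dotx i, dotProduct_comm]
  have hterm : ∀ i, a i ⬝ᵥ (((σ i)⁻¹ • ((x i)ᵀ * x i)) *ᵥ a i)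
      = (σ i)⁻¹ * (ε i ⬝ᵥ (x i * ((x i)ᵀ * x i)⁻¹ * (x i)ᵀ) *ᵥ ε i)
        + (σ i)⁻¹ * (lam i ⬝ᵥ (((x i)ᵀ * x i) *ᵥ lam i))
        + 2 * ((σ i)⁻¹ * (ε i ⬝ᵥ x i *ᵥ lam i)) := by
    intro i
    rw [hMa i, dotProduct_smul, smul_eq_mul]
    simp only [hadef]
    rw [dotProduct_add, add_dotProduct, add_dotProduct,
      t1 i, t2 i, t3 i]
    ring
  have hsumterm : (∑ i, a i ⬝ᵥ (((σ i)⁻¹ • ((x i)ᵀ * x i)) *ᵥ a i))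
      = (∑ i, (σ i)⁻¹ * (ε i ⬝ᵥ (x i * ((x i)ᵀ * x i)⁻¹ * (x i)ᵀ) *ᵥ ε i))
        + (∑ i, (σ i)⁻¹ * (lam i ⬝ᵥ (((x i)ᵀ * x i) *ᵥ lam i)))
        + 2 * (∑ i, (σ i)⁻¹ * (ε i ⬝ᵥ x i *ᵥ lam i)) := by
    rw [Finset.mul_sum, ← Finset.sum_add_distrib, ← Finset.sum_add_distrib]
    exact Finset.sum_congr rfl fun i _ => hterm i
  have hcross : dl ⬝ᵥ A⁻¹ *ᵥ de = de ⬝ᵥ A⁻¹ *ᵥ dl := by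
    rw [symdot _ hAinvsym dl de, dotProduct_comm]
  have hwd : (dl + de) ⬝ᵥ w
      = dl ⬝ᵥ (A⁻¹ *ᵥ dl) + de ⬝ᵥ (A⁻¹ *ᵥ de) + 2 * (de ⬝ᵥ (A⁻¹ *ᵥ dl)) := by
    rw [hwdef, Matrix.mulVec_add, dotProduct_add, add_dotProduct,
      add_dotProduct, hcross]
    ring
  rw [hSpy, hsumterm, hwd, hR, hC]
  ring
end
end
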